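/- arXiv:1806.10952 — 4 statements merged into one kernel-verified Lean document; each statement's English description precedes it below -/
import Mathlib

section
/- Let F : ℝ^n → ℝ, let p ∈ ℝ^n, let j be a coordinate, and suppose F is differentiable at p in direction j with z := −∂F/∂p_j(p). Let Γ > 0, z̃ ∈ ℝ, Δt ∈ (0,1], set Δp := (z̃/Γ)·Δt and p' := p + Δp·e_j, and assume the one-coordinate quadratic upper bound F(p') ≤ F(p) + (∂F/∂p_j(p))·Δp + (Γ/2)·(Δp)². Then F(p) − F(p') ≥ (Γ/4)·(Δp)²/Δt − (1/Γ)·(z − z̃)²·Δt. -/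
/-! With `Δp = z̃ Δt / Γ`, the quadratic upper bound gives `F p - F p' ≥ z Δp - Γ/2 Δp²`, and
this exceeds the claimed bound by `(Δt/Γ) ((z - z̃/2)² + z̃²/2 (1 - Δt))`, which is
nonnegative for `Δt ≤ 1`. -/

lemma step_gain_sub_bound_eq {Γ Δt : ℝ} (hΓ : Γ ≠ 0) (hΔt : Δt ≠ 0) (z zt : ℝ) :
    z * (zt / Γ * Δt) - Γ / 2 * (zt / Γ * Δt) ^ 2 -
        (Γ / 4 * (zt / Γ * Δt) ^ 2 / Δt - 1 / Γ * (z - zt) ^ 2 * Δt) =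
      Δt / Γ * ((z - zt / 2) ^ 2 + zt ^ 2 / 2 * (1 - Δt)) := by
  field_simp
  ring

lemma step_bound_le_gain {Γ Δt : ℝ} (hΓ : 0 < Γ) (hΔt0 : 0 < Δt) (hΔt1 : Δt ≤ 1) (z zt : ℝ) :
    Γ / 4 * (zt / Γ * Δt) ^ 2 / Δt - 1 / Γ * (z - zt) ^ 2 * Δt ≤
      z * (zt / Γ * Δt) - Γ / 2 * (zt / Γ * Δt) ^ 2 := by
  have hgap : 0 ≤ Δt / Γ * ((z - zt / 2) ^ 2 + zt ^ 2 / 2 * (1 - Δt)) := by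
    have : 0 ≤ 1 - Δt := sub_nonneg.mpr hΔt1
    positivity
  rw [← step_gain_sub_bound_eq hΓ.ne' hΔt0.ne'] at hgap
  linarith

theorem stmt_3_general (n : ℕ) (F : (Fin n → ℝ) → ℝ) (p : Fin n → ℝ)
    (d z : ℝ)
    (hz : z = -d)
    (Γ zt Δt : ℝ) (hΓ : 0 < Γ) (hΔt0 : 0 < Δt) (hΔt1 : Δt ≤ 1)
    (Δp : ℝ) (hΔp : Δp = zt / Γ * Δt)
    (p' : Fin n → ℝ)
    (hquad : F p' ≤ F p + d * Δp + Γ / 2 * Δp ^ 2) :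
    F p - F p' ≥ Γ / 4 * Δp ^ 2 / Δt - 1 / Γ * (z - zt) ^ 2 * Δt := by
  subst hz hΔp
  have := step_bound_le_gain hΓ hΔt0 hΔt1 (-d) zt
  linarith

/-- abstract progress/error estimate for one asynchronous
coordinate-descent update with inaccurate gradient value `z̃`.
`F` is differentiable at `p` in direction `j` with directional derivative `d`,
`z := −d`, `Δp := (z̃/Γ)·Δt`, `p' := p + Δp·e_j`, and the one-coordinate
quadratic (descent-lemma) upper bound holds with parameter `Γ`. Then
`F(p) − F(p') ≥ (Γ/4)·(Δp)²/Δt − (1/Γ)·(z−z̃)²·Δt`. -/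
theorem stmt_3 (n : ℕ) (F : (Fin n → ℝ) → ℝ) (p : Fin n → ℝ) (j : Fin n)
    (d z : ℝ)
    (hd : HasDerivAt (fun s : ℝ => F (p + s • (Pi.single j (1 : ℝ) : Fin n → ℝ))) d 0)
    (hz : z = -d)
    (Γ zt Δt : ℝ) (hΓ : 0 < Γ) (hΔt0 : 0 < Δt) (hΔt1 : Δt ≤ 1)
    (Δp : ℝ) (hΔp : Δp = zt / Γ * Δt)
    (p' : Fin n → ℝ) (hp' : p' = p + Δp • (Pi.single j (1 : ℝ) : Fin n → ℝ))
    (hquad : F p' ≤ F p + d * Δp + Γ / 2 * Δp ^ 2) :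
    F p - F p' ≥ Γ / 4 * Δp ^ 2 / Δt - 1 / Γ * (z - zt) ^ 2 * Δt :=
  stmt_3_general n F p d z hz Γ zt Δt hΓ hΔt0 hΔt1 Δp hΔp p' hquad
end

section
/- Let M be a Fisher market in which every buyer i has a CES utility with parameter ρ_i < 1, ρ_i ≠ 0; let ρ := max_i ρ_i, θ := max{ρ/(1−ρ), 1}, and E := max{1/(1−ρ), 1}. Let p be a positive price vector, let r ≥ 1, and let p' be any positive price vector with p_k/r ≤ p'_k ≤ r·p_k for every good k. Then for every good j, ∑_{k ≠ j} |∂²φ/∂p_j∂p_k(p')|·p_k ≤ θ·r^{2E}·x_j(p), where x_j(p) is the total demand for good j at prices p. -/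
open Finset

/-- The CES utility `u(x) = (∑_j a_j x_j^ρ)^{1/ρ}`. -/
noncomputable def cesUtil {n : ℕ} (a : Fin n → ℝ) (ρ : ℝ) (x : Fin n → ℝ) : ℝ :=
  (∑ j, a j * x j ^ ρ) ^ (1 / ρ)

/-- The budget set `{x ≥ 0 : p·x ≤ e}`. -/
def budgetSet {n : ℕ} (p : Fin n → ℝ) (e : ℝ) : Set (Fin n → ℝ) :=
  {x | (∀ j, 0 ≤ x j) ∧ ∑ j, p j * x j ≤ e}

/-- `x` is a demand of a buyer with CES utility `(a, ρ)` and budget `e` at prices `p`: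
it is a utility-maximizing affordable bundle. -/
def IsDemand {n : ℕ} (a : Fin n → ℝ) (ρ : ℝ) (p : Fin n → ℝ) (e : ℝ)
    (x : Fin n → ℝ) : Prop :=
  x ∈ budgetSet p e ∧ ∀ y ∈ budgetSet p e, cesUtil a ρ y ≤ cesUtil a ρ x

/-- A Fisher market with `n` goods (each of unit supply) and `m` buyers having CES
utilities: buyer `i` has coefficients `a i` (non-negative, not all zero), parameter
`ρ i < 1`, `ρ i ≠ 0`, budget `e i > 0`, and at every positive price vector her demand
`x p i` is the unique utility maximizer over her budget set. -/
structure CESMarket (n m : ℕ) where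
  a : Fin m → Fin n → ℝ
  ρ : Fin m → ℝ
  e : Fin m → ℝ
  a_nonneg : ∀ i j, 0 ≤ a i j
  a_ne_zero : ∀ i, ∃ j, a i j ≠ 0
  e_pos : ∀ i, 0 < e i
  ρ_lt_one : ∀ i, ρ i < 1
  ρ_ne_zero : ∀ i, ρ i ≠ 0
  x : (Fin n → ℝ) → Fin m → Fin n → ℝ
  x_isDemand : ∀ p, (∀ j, 0 < p j) → ∀ i, IsDemand (a i) (ρ i) p (e i) (x p i)
  x_unique : ∀ p, (∀ j, 0 < p j) → ∀ i y, IsDemand (a i) (ρ i) p (e i) y → y = x p i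

/-- Total demand for good `j` at prices `p`. -/
noncomputable def totalDemand {n m : ℕ} (M : CESMarket n m) (p : Fin n → ℝ)
    (j : Fin n) : ℝ :=
  ∑ i, M.x p i j

/-- Excess demand for good `j` at prices `p` (supply of each good is one unit). -/
noncomputable def cesExcess {n m : ℕ} (M : CESMarket n m) (p : Fin n → ℝ)
    (j : Fin n) : ℝ :=
  totalDemand M p j - 1

/-- `û_i(p)`: the optimal utility attainable with one unit of spending at prices `p`. -/
noncomputable def uhat {n : ℕ} (a : Fin n → ℝ) (ρ : ℝ) (p : Fin n → ℝ) : ℝ :=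
  sSup (cesUtil a ρ '' budgetSet p 1)

/-- The convex potential `φ(p) = ∑_k p_k + ∑_i e_i · log û_i(p)`. -/
noncomputable def phi {n m : ℕ} (M : CESMarket n m) (p : Fin n → ℝ) : ℝ :=
  ∑ k, p k + ∑ i, M.e i * Real.log (uhat (M.a i) (M.ρ i) p)

/-- `p` is a market equilibrium: prices are non-negative and there exist demands,
one for each buyer, under which every positively-priced good exactly clears and
every zero-priced good is not over-demanded. -/
def IsCESEquilibrium {n m : ℕ} (M : CESMarket n m) (p : Fin n → ℝ) : Prop :=
  (∀ j, 0 ≤ p j) ∧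
  ∃ x : Fin m → Fin n → ℝ,
    (∀ i, IsDemand (M.a i) (M.ρ i) p (M.e i) (x i)) ∧
    ∀ j, (0 < p j → ∑ i, x i j = 1) ∧ (p j = 0 → ∑ i, x i j ≤ 1)

/-- The partial derivative `∂F/∂p_k` of `F : ℝⁿ → ℝ` at `p`. -/
noncomputable def partialDeriv' {n : ℕ} (F : (Fin n → ℝ) → ℝ) (k : Fin n)
    (p : Fin n → ℝ) : ℝ :=
  fderiv ℝ F p (Pi.single k (1 : ℝ))

/-- The second partial derivative `∂²F/∂p_j∂p_k` of `F : ℝⁿ → ℝ` at `p`. -/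
noncomputable def secondPartial {n : ℕ} (F : (Fin n → ℝ) → ℝ) (j k : Fin n)
    (p : Fin n → ℝ) : ℝ :=
  partialDeriv' (partialDeriv' F k) j p

/-!
For a CES buyer the demand has the closed form `x_j = e b_j p_j^(θ-1) / ∑_k b_k p_k^θ` with
`θ = ρ/(ρ-1)` and `b_j = a_j^(1-θ)`: for `0 < ρ < 1` this is Hölder's inequality, and for `ρ < 0`
the uniqueness of demand forces the buyer to like a single good. Hence on the positive orthant
`φ(p) = ∑_k p_k + ∑_i e_i (1-ρ_i)/ρ_i · log ∑_k b_ik p_k^θ_i`, whose partial derivatives are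
`1 - x_k` and, for `j ≠ k`, `∑_i θ_i x_ij x_ik / e_i`. The bounds `|θ_i| ≤ θ`,
`∑_k x_ik(p') p_k ≤ r e_i` and `x_ij(p') ≤ r^(2E-1) x_ij(p)` (the last from
`(1 - θ_i) + |θ_i| ≤ 2E - 1`) give the claim.
-/

open Real Topology

noncomputable def cesTheta (ρ : ℝ) : ℝ := ρ / (ρ - 1)

noncomputable def cesWeight {n : ℕ} (a : Fin n → ℝ) (ρ : ℝ) (j : Fin n) : ℝ :=
  a j ^ (1 - cesTheta ρ)

noncomputable def cesPriceSum {n : ℕ} (a : Fin n → ℝ) (ρ : ℝ) (p : Fin n → ℝ) : ℝ :=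
  ∑ k, cesWeight a ρ k * p k ^ cesTheta ρ

noncomputable def cesDemand {n : ℕ} (a : Fin n → ℝ) (ρ e : ℝ) (p : Fin n → ℝ) (j : Fin n) :
    ℝ :=
  e * (cesWeight a ρ j * p j ^ (cesTheta ρ - 1)) / cesPriceSum a ρ p

section Exponent

variable {ρ : ℝ}

lemma cesTheta_eq (hρ : ρ < 1) : cesTheta ρ = 1 - (1 - ρ)⁻¹ := by
  have : ρ - 1 ≠ 0 := by linarith
  have : 1 - ρ ≠ 0 := by linarith
  unfold cesTheta
  field_simp
  ring

lemma cesTheta_lt_one (hρ : ρ < 1) : cesTheta ρ < 1 := by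
  have : 0 < (1 - ρ)⁻¹ := inv_pos.2 (by linarith)
  rw [cesTheta_eq hρ]
  linarith

lemma one_sub_cesTheta_mul (hρ : ρ < 1) : (1 - cesTheta ρ) * (1 - ρ) = 1 := by
  rw [cesTheta_eq hρ, sub_sub_cancel, inv_mul_cancel₀ (by linarith)]

lemma cesTheta_mul_one_sub (hρ : ρ < 1) : cesTheta ρ * (1 - ρ) = -ρ := by
  rw [cesTheta_eq hρ, sub_mul, inv_mul_cancel₀ (by linarith)]
  ring

lemma cesTheta_sub_one_mul (hρ : ρ < 1) : (cesTheta ρ - 1) * ρ = cesTheta ρ := by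
  have : 1 - ρ ≠ 0 := by linarith
  rw [cesTheta_eq hρ]
  field_simp
  ring

lemma one_sub_div_mul_cesTheta (hρ : ρ < 1) (hρ0 : ρ ≠ 0) : (1 - ρ) / ρ * cesTheta ρ = -1 := by
  have : ρ - 1 ≠ 0 := by linarith
  unfold cesTheta
  field_simp
  ring

lemma abs_cesTheta_le {ρ' : ℝ} (hρ' : ρ' < 1) (hle : ρ ≤ ρ') :
    |cesTheta ρ| ≤ max (ρ' / (1 - ρ')) 1 := by
  have hu : (1 - ρ)⁻¹ ≤ (1 - ρ')⁻¹ := inv_anti₀ (by linarith) (by linarith)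
  have hu0 : 0 < (1 - ρ)⁻¹ := inv_pos.2 (by linarith)
  have hρ'eq : ρ' / (1 - ρ') = (1 - ρ')⁻¹ - 1 := by
    have : 1 - ρ' ≠ 0 := by linarith
    field_simp
    ring
  rw [cesTheta_eq (hle.trans_lt hρ'), hρ'eq]
  rcases abs_cases (1 - (1 - ρ)⁻¹) with ⟨h, _⟩ | ⟨h, _⟩ <;> rw [h]
  · linarith [le_max_right ((1 - ρ')⁻¹ - 1) 1]
  · linarith [le_max_left ((1 - ρ')⁻¹ - 1) 1]

lemma one_sub_cesTheta_add_abs_le {ρ' : ℝ} (hρ' : ρ' < 1) (hle : ρ ≤ ρ') :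
    1 - cesTheta ρ + |cesTheta ρ| ≤ 2 * max (1 / (1 - ρ')) 1 - 1 := by
  have hu : (1 - ρ)⁻¹ ≤ (1 - ρ')⁻¹ := inv_anti₀ (by linarith) (by linarith)
  rw [cesTheta_eq (hle.trans_lt hρ'), one_div]
  rcases abs_cases (1 - (1 - ρ)⁻¹) with ⟨h, _⟩ | ⟨h, _⟩ <;> rw [h]
  · linarith [le_max_right (1 - ρ')⁻¹ 1]
  · linarith [le_max_left (1 - ρ')⁻¹ 1]

end Exponent

lemma sum_rpow_mul_rpow_le {ι : Type*} (s : Finset ι) {f g : ι → ℝ} {t : ℝ} (ht0 : 0 < t)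
    (ht1 : t < 1) (hf : ∀ i ∈ s, 0 ≤ f i) (hg : ∀ i ∈ s, 0 ≤ g i) :
    ∑ i ∈ s, f i ^ t * g i ^ (1 - t) ≤ (∑ i ∈ s, f i) ^ t * (∑ i ∈ s, g i) ^ (1 - t) := by
  have hpq : (1 / t).HolderConjugate (1 / (1 - t)) := by
    rw [Real.holderConjugate_iff]
    refine ⟨by rw [lt_div_iff₀ ht0]; linarith, ?_⟩
    simp only [one_div, inv_inv]
    ring
  have H := inner_le_Lp_mul_Lq_of_nonneg s hpq (fun i hi => rpow_nonneg (hf i hi) t)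
    (fun i hi => rpow_nonneg (hg i hi) (1 - t))
  have cancel : ∀ {x u : ℝ}, 0 ≤ x → u ≠ 0 → (x ^ u) ^ (1 / u) = x := fun hx hu => by
    rw [← rpow_mul hx, mul_one_div_cancel hu, rpow_one]
  rw [sum_congr rfl fun i hi => cancel (hf i hi) ht0.ne',
    sum_congr rfl fun i hi => cancel (hg i hi) (by linarith : 1 - t ≠ 0)] at H
  simpa only [one_div_one_div] using H

lemma price_mul_le_of_mem_budgetSet {n : ℕ} {p x : Fin n → ℝ} {e : ℝ} (hp : ∀ k, 0 ≤ p k)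
    (hx : x ∈ budgetSet p e) (l : Fin n) : p l * x l ≤ e :=
  (single_le_sum (fun k _ => mul_nonneg (hp k) (hx.1 k)) (mem_univ l)).trans hx.2

lemma sum_mul_le_of_mem_budgetSet {n : ℕ} {p p' x : Fin n → ℝ} {e r : ℝ}
    (s : Finset (Fin n)) (hx : x ∈ budgetSet p' e) (hp : ∀ k, 0 ≤ p k) (hr : 0 ≤ r)
    (hpp' : ∀ k, p k ≤ r * p' k) : ∑ k ∈ s, x k * p k ≤ r * e :=
  calc ∑ k ∈ s, x k * p k
      ≤ ∑ k, x k * p k := sum_le_sum_of_subset_of_nonneg (subset_univ s)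
        fun k _ _ => mul_nonneg (hx.1 k) (hp k)
    _ ≤ ∑ k, r * (p' k * x k) := sum_le_sum fun k _ => by
        linarith [mul_le_mul_of_nonneg_left (hpp' k) (hx.1 k)]
    _ ≤ r * e := by rw [← mul_sum]; exact mul_le_mul_of_nonneg_left hx.2 hr

lemma mul_rpow_rpow_one_div {ρ a z : ℝ} (hρ0 : ρ ≠ 0) (ha : 0 ≤ a) (hz : 0 ≤ z) :
    (a * z ^ ρ) ^ (1 / ρ) = a ^ (1 / ρ) * z := by
  rw [mul_rpow ha (rpow_nonneg hz _), ← rpow_mul hz, mul_one_div_cancel hρ0, rpow_one]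

section Demand

variable {n : ℕ} {a : Fin n → ℝ} {ρ e : ℝ} {p : Fin n → ℝ}

lemma cesWeight_nonneg (ha : ∀ j, 0 ≤ a j) (j : Fin n) : 0 ≤ cesWeight a ρ j :=
  rpow_nonneg (ha j) _

lemma cesWeight_rpow_one_sub (hρ : ρ < 1) (ha : ∀ j, 0 ≤ a j) (j : Fin n) :
    cesWeight a ρ j ^ (1 - ρ) = a j := by
  rw [cesWeight, ← rpow_mul (ha j), one_sub_cesTheta_mul hρ, rpow_one]

lemma mul_cesWeight_rpow (hρ : ρ < 1) (ha : ∀ j, 0 ≤ a j) (j : Fin n) :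
    a j * cesWeight a ρ j ^ ρ = cesWeight a ρ j := by
  conv_lhs => rw [← cesWeight_rpow_one_sub hρ ha j]
  rw [← rpow_add' (cesWeight_nonneg ha j) (by rw [sub_add_cancel]; exact one_ne_zero),
    sub_add_cancel, rpow_one]

lemma cesPriceSum_pos (ha : ∀ j, 0 ≤ a j) (ha0 : ∃ j, a j ≠ 0) (hp : ∀ j, 0 < p j) :
    0 < cesPriceSum a ρ p := by
  obtain ⟨j, hj⟩ := ha0
  exact sum_pos' (fun k _ => mul_nonneg (cesWeight_nonneg ha k) (rpow_nonneg (hp k).le _))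
    ⟨j, mem_univ j, mul_pos (rpow_pos_of_pos ((ha j).lt_of_ne' hj) _) (rpow_pos_of_pos (hp j) _)⟩

lemma cesDemand_nonneg (ha : ∀ j, 0 ≤ a j) (he : 0 ≤ e) (hp : ∀ j, 0 < p j) (j : Fin n) :
    0 ≤ cesDemand a ρ e p j :=
  div_nonneg (mul_nonneg he (mul_nonneg (cesWeight_nonneg ha j) (rpow_nonneg (hp j).le _)))
    (sum_nonneg fun k _ => mul_nonneg (cesWeight_nonneg ha k) (rpow_nonneg (hp k).le _))

lemma price_mul_cesDemand (hp : ∀ j, 0 < p j) (j : Fin n) :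
    p j * cesDemand a ρ e p j = e * (cesWeight a ρ j * p j ^ cesTheta ρ) / cesPriceSum a ρ p := by
  have hpj := (hp j).ne'
  rw [cesDemand, rpow_sub_one hpj]
  field_simp

lemma sum_price_mul_cesDemand (hp : ∀ j, 0 < p j) (hG : cesPriceSum a ρ p ≠ 0) :
    ∑ j, p j * cesDemand a ρ e p j = e := by
  rw [sum_congr rfl fun j _ => price_mul_cesDemand hp j, ← sum_div, ← mul_sum, ← cesPriceSum,
    mul_div_assoc, div_self hG, mul_one]

lemma cesDemand_mem_budgetSet (ha : ∀ j, 0 ≤ a j) (ha0 : ∃ j, a j ≠ 0) (he : 0 ≤ e)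
    (hp : ∀ j, 0 < p j) : cesDemand a ρ e p ∈ budgetSet p e :=
  ⟨cesDemand_nonneg ha he hp, (sum_price_mul_cesDemand hp (cesPriceSum_pos ha ha0 hp).ne').le⟩

lemma sum_mul_cesDemand_rpow (hρ : ρ < 1) (ha : ∀ j, 0 ≤ a j) (he : 0 ≤ e)
    (hp : ∀ j, 0 < p j) (hG : 0 < cesPriceSum a ρ p) :
    ∑ l, a l * cesDemand a ρ e p l ^ ρ = e ^ ρ * cesPriceSum a ρ p ^ (1 - ρ) := by
  have hterm : ∀ l, a l * cesDemand a ρ e p l ^ ρ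
      = (e / cesPriceSum a ρ p) ^ ρ * (cesWeight a ρ l * p l ^ cesTheta ρ) := fun l => by
    have hx : cesDemand a ρ e p l
        = e / cesPriceSum a ρ p * (cesWeight a ρ l * p l ^ (cesTheta ρ - 1)) := by
      rw [cesDemand]; ring
    rw [hx, mul_rpow (div_nonneg he hG.le)
        (mul_nonneg (cesWeight_nonneg ha l) (rpow_nonneg (hp l).le _)),
      mul_rpow (cesWeight_nonneg ha l) (rpow_nonneg (hp l).le _), ← rpow_mul (hp l).le,
      cesTheta_sub_one_mul hρ]
    linear_combination (e / cesPriceSum a ρ p) ^ ρ * p l ^ cesTheta ρ * mul_cesWeight_rpow hρ ha l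
  rw [sum_congr rfl fun l _ => hterm l, ← mul_sum, ← cesPriceSum, div_rpow he hG.le,
    rpow_sub hG, rpow_one]
  field_simp

lemma cesUtil_cesDemand (hρ : ρ < 1) (hρ0 : ρ ≠ 0) (ha : ∀ j, 0 ≤ a j) (he : 0 ≤ e)
    (hp : ∀ j, 0 < p j) (hG : 0 < cesPriceSum a ρ p) :
    cesUtil a ρ (cesDemand a ρ e p) = e * cesPriceSum a ρ p ^ ((1 - ρ) / ρ) := by
  rw [cesUtil, sum_mul_cesDemand_rpow hρ ha he hp hG,
    mul_rpow (rpow_nonneg he _) (rpow_nonneg hG.le _), ← rpow_mul he, ← rpow_mul hG.le,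
    mul_one_div_cancel hρ0, rpow_one, mul_one_div]

lemma cesUtil_le_cesUtil_cesDemand (hρ0 : 0 < ρ) (hρ : ρ < 1) (ha : ∀ j, 0 ≤ a j)
    (hp : ∀ j, 0 < p j) (hG : 0 < cesPriceSum a ρ p) {z : Fin n → ℝ}
    (hz : z ∈ budgetSet p e) : cesUtil a ρ z ≤ cesUtil a ρ (cesDemand a ρ e p) := by
  have he : 0 ≤ e := (sum_nonneg fun l _ => mul_nonneg (hp l).le (hz.1 l)).trans hz.2
  -- Hölder's inequality with exponents `1/ρ` and `1/(1-ρ)`, after this splitting of each term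
  have hterm : ∀ l, a l * z l ^ ρ
      = (p l * z l) ^ ρ * (cesWeight a ρ l * p l ^ cesTheta ρ) ^ (1 - ρ) := fun l => by
    rw [mul_rpow (hp l).le (hz.1 l), mul_rpow (cesWeight_nonneg ha l) (rpow_nonneg (hp l).le _),
      cesWeight_rpow_one_sub hρ ha l, ← rpow_mul (hp l).le, cesTheta_mul_one_sub hρ,
      rpow_neg (hp l).le]
    field_simp [(rpow_pos_of_pos (hp l) ρ).ne']
  have hsum : ∑ l, a l * z l ^ ρ ≤ ∑ l, a l * cesDemand a ρ e p l ^ ρ := by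
    rw [sum_mul_cesDemand_rpow hρ ha he hp hG, sum_congr rfl fun l _ => hterm l]
    calc _ ≤ (∑ l, p l * z l) ^ ρ * cesPriceSum a ρ p ^ (1 - ρ) :=
          sum_rpow_mul_rpow_le _ hρ0 hρ (fun l _ => mul_nonneg (hp l).le (hz.1 l))
            fun l _ => mul_nonneg (cesWeight_nonneg ha l) (rpow_nonneg (hp l).le _)
      _ ≤ e ^ ρ * cesPriceSum a ρ p ^ (1 - ρ) := by
          gcongr
          · exact sum_nonneg fun l _ => mul_nonneg (hp l).le (hz.1 l)
          · exact hz.2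
  exact rpow_le_rpow (sum_nonneg fun l _ => mul_nonneg (ha l) (rpow_nonneg (hz.1 l) _)) hsum
    (by positivity)

lemma cesUtil_eq_of_single_good {j₀ : Fin n} {z : Fin n → ℝ} (hρ0 : ρ ≠ 0)
    (ha : ∀ j, 0 ≤ a j) (hz : ∀ l, 0 ≤ z l) (hj₀ : ∀ l, l ≠ j₀ → a l = 0 ∨ z l = 0) :
    cesUtil a ρ z = a j₀ ^ (1 / ρ) * z j₀ := by
  have hsum : ∑ l, a l * z l ^ ρ = a j₀ * z j₀ ^ ρ := by
    refine sum_eq_single j₀ (fun l _ hl => ?_) (fun h => absurd (mem_univ j₀) h)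
    rcases hj₀ l hl with h | h <;> simp [h, zero_rpow hρ0]
  rw [cesUtil, hsum, mul_rpow_rpow_one_div hρ0 (ha j₀) (hz j₀)]

lemma cesDemand_of_single_good (hρ : ρ < 1) (ha : ∀ j, 0 ≤ a j) {j₀ : Fin n} (haj₀ : a j₀ ≠ 0)
    (hsupp : ∀ l, l ≠ j₀ → a l = 0) (hp : ∀ j, 0 < p j) :
    cesDemand a ρ e p j₀ = e / p j₀ := by
  have hb : ∀ l, l ≠ j₀ → cesWeight a ρ l = 0 := fun l hl => by
    rw [cesWeight, hsupp l hl, zero_rpow (sub_pos.2 (cesTheta_lt_one hρ)).ne']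
  have hG : cesPriceSum a ρ p = cesWeight a ρ j₀ * p j₀ ^ cesTheta ρ :=
    sum_eq_single j₀ (fun l _ hl => by rw [hb l hl, zero_mul]) (fun h => absurd (mem_univ j₀) h)
  have hb₀ : cesWeight a ρ j₀ ≠ 0 := (rpow_pos_of_pos ((ha j₀).lt_of_ne' haj₀) _).ne'
  have hp₀ := (hp j₀).ne'
  have hpθ := (rpow_pos_of_pos (hp j₀) (cesTheta ρ)).ne'
  rw [cesDemand, hG, rpow_sub_one hp₀]
  field_simp

lemma cesUtil_le_of_neg (hρ : ρ < 0) (ha : ∀ j, 0 ≤ a j) {z : Fin n → ℝ} (hz : ∀ l, 0 ≤ z l)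
    {t : Fin n} (hat : 0 < a t) (hzt : 0 < z t) : cesUtil a ρ z ≤ a t ^ (1 / ρ) * z t :=
  calc cesUtil a ρ z = (∑ l, a l * z l ^ ρ) ^ (1 / ρ) := rfl
    _ ≤ (a t * z t ^ ρ) ^ (1 / ρ) :=
        rpow_le_rpow_of_nonpos (mul_pos hat (rpow_pos_of_pos hzt ρ))
          (single_le_sum (fun l _ => mul_nonneg (ha l) (rpow_nonneg (hz l) _)) (mem_univ t))
          (one_div_nonpos.2 hρ.le)
    _ = a t ^ (1 / ρ) * z t := mul_rpow_rpow_one_div hρ.ne hat.le hzt.le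

lemma isDemand_single_of_neg (hρ : ρ < 0) (ha : ∀ j, 0 ≤ a j) (he : 0 ≤ e) (hp : ∀ j, 0 < p j)
    (hpa : ∀ t, a t ≠ 0 → a t ^ (1 / ρ) = p t) {l : Fin n} (hl : a l ≠ 0) :
    IsDemand a ρ p e (Pi.single l (e / p l)) := by
  have hnn : ∀ t, 0 ≤ (Pi.single l (e / p l) : Fin n → ℝ) t := fun t => by
    rcases eq_or_ne t l with rfl | ht
    · simpa using div_nonneg he (hp t).le
    · simp [Pi.single_eq_of_ne ht]
  have hspend : ∑ t, p t * (Pi.single l (e / p l) : Fin n → ℝ) t = e := by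
    rw [sum_eq_single l (fun t _ ht => by rw [Pi.single_eq_of_ne ht, mul_zero])
      (fun h => absurd (mem_univ l) h), Pi.single_eq_same, mul_div_cancel₀ _ (hp l).ne']
  have hutil : cesUtil a ρ (Pi.single l (e / p l)) = e := by
    rw [cesUtil_eq_of_single_good hρ.ne ha hnn fun t ht => Or.inr (Pi.single_eq_of_ne ht _),
      Pi.single_eq_same, hpa l hl, mul_div_cancel₀ _ (hp l).ne']
  refine ⟨⟨hnn, hspend.le⟩, fun z hz => ?_⟩
  rw [hutil]
  by_cases hbuy : ∃ t, a t ≠ 0 ∧ 0 < z t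
  · obtain ⟨t, hat, hzt⟩ := hbuy
    calc cesUtil a ρ z ≤ a t ^ (1 / ρ) * z t :=
          cesUtil_le_of_neg hρ ha hz.1 ((ha t).lt_of_ne' hat) hzt
      _ = p t * z t := by rw [hpa t hat]
      _ ≤ e := price_mul_le_of_mem_budgetSet (fun k => (hp k).le) hz t
  · push Not at hbuy
    have hterm : ∀ t, a t * z t ^ ρ = 0 := fun t => by
      by_cases hat : a t = 0
      · rw [hat, zero_mul]
      · rw [le_antisymm (hbuy t hat) (hz.1 t), zero_rpow hρ.ne, mul_zero]
    rw [cesUtil, sum_congr rfl fun t _ => hterm t, sum_const_zero,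
      zero_rpow (one_div_ne_zero hρ.ne)]
    exact he

lemma isDemand_cesDemand (hρ : ρ < 1) (hρ0 : ρ ≠ 0) (ha : ∀ j, 0 ≤ a j) (ha0 : ∃ j, a j ≠ 0)
    (he : 0 ≤ e) (hp : ∀ j, 0 < p j) (hsing : ρ < 0 → (Function.support a).Subsingleton) :
    IsDemand a ρ p e (cesDemand a ρ e p) := by
  refine ⟨cesDemand_mem_budgetSet ha ha0 he hp, fun z hz => ?_⟩
  rcases hρ0.lt_or_gt with hneg | hpos
  · obtain ⟨j₀, hj₀⟩ := ha0
    have hsupp : ∀ l, l ≠ j₀ → a l = 0 := fun l hl => by_contra fun h => hl (hsing hneg h hj₀)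
    have hsingle : ∀ x : Fin n → ℝ, (∀ l, 0 ≤ x l) → cesUtil a ρ x = a j₀ ^ (1 / ρ) * x j₀ :=
      fun x hx => cesUtil_eq_of_single_good hρ0 ha hx fun l hl => Or.inl (hsupp l hl)
    rw [hsingle z hz.1, hsingle _ (cesDemand_nonneg ha he hp),
      cesDemand_of_single_good hρ ha hj₀ hsupp hp]
    refine mul_le_mul_of_nonneg_left ((le_div_iff₀ (hp j₀)).2 ?_) (rpow_nonneg (ha j₀) _)
    linarith [price_mul_le_of_mem_budgetSet (fun k => (hp k).le) hz j₀]
  · exact cesUtil_le_cesUtil_cesDemand hpos hρ ha hp (cesPriceSum_pos ha ha0 hp) hz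

lemma uhat_eq (hρ : ρ < 1) (hρ0 : ρ ≠ 0) (ha : ∀ j, 0 ≤ a j) (ha0 : ∃ j, a j ≠ 0)
    (hp : ∀ j, 0 < p j) (hsing : ρ < 0 → (Function.support a).Subsingleton) :
    uhat a ρ p = cesPriceSum a ρ p ^ ((1 - ρ) / ρ) := by
  have hd := isDemand_cesDemand hρ hρ0 ha ha0 zero_le_one hp hsing
  have hval := cesUtil_cesDemand hρ hρ0 ha zero_le_one hp (cesPriceSum_pos ha ha0 hp)
  rw [one_mul] at hval
  rw [uhat, ← hval]
  exact IsGreatest.csSup_eq ⟨⟨_, hd.1, rfl⟩, by rintro _ ⟨z, hz, rfl⟩; exact hd.2 z hz⟩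

end Demand

section Calculus

variable {n : ℕ}

lemma eventually_pos_nhds {q : Fin n → ℝ} (hq : ∀ j, 0 < q j) : ∀ᶠ w in 𝓝 q, ∀ j, 0 < w j :=
  Filter.eventually_all.2 fun j => ((continuous_apply j).tendsto q).eventually (lt_mem_nhds (hq j))

noncomputable def coordForm (c : Fin n → ℝ) : (Fin n → ℝ) →L[ℝ] ℝ :=
  ∑ l, c l • ContinuousLinearMap.proj l

lemma coordForm_single (c : Fin n → ℝ) (k : Fin n) : coordForm c (Pi.single k 1) = c k := by
  simp [coordForm, Pi.single_apply]

lemma hasFDerivAt_sum_apply {g : Fin n → ℝ → ℝ} {g' : Fin n → ℝ} {q : Fin n → ℝ}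
    (hg : ∀ l, HasDerivAt (g l) (g' l) (q l)) :
    HasFDerivAt (fun w => ∑ l, g l (w l)) (coordForm g') q :=
  HasFDerivAt.fun_sum fun l _ => (hg l).comp_hasFDerivAt q (hasFDerivAt_apply l q)

variable {a : Fin n → ℝ} {ρ e : ℝ} {q : Fin n → ℝ}

lemma hasFDerivAt_cesPriceSum (hq : ∀ j, 0 < q j) :
    HasFDerivAt (cesPriceSum a ρ)
      (coordForm fun l => cesWeight a ρ l * (cesTheta ρ * q l ^ (cesTheta ρ - 1))) q :=
  hasFDerivAt_sum_apply fun l => (hasDerivAt_rpow_const (Or.inl (hq l).ne')).const_mul _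

lemma exists_hasFDerivAt_cesDemand (he : e ≠ 0) (hq : ∀ j, 0 < q j)
    (hG : cesPriceSum a ρ q ≠ 0) {j k : Fin n} (hjk : j ≠ k) :
    ∃ D : (Fin n → ℝ) →L[ℝ] ℝ, HasFDerivAt (fun w => cesDemand a ρ e w k) D q ∧
      D (Pi.single j 1) = -(cesTheta ρ * cesDemand a ρ e q j * cesDemand a ρ e q k / e) := by
  have hnum := (((hasDerivAt_rpow_const (p := cesTheta ρ - 1) (Or.inl (hq k).ne')).const_mul
    (cesWeight a ρ k)).const_mul e).comp_hasFDerivAt q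
    (ContinuousLinearMap.proj k : (Fin n → ℝ) →L[ℝ] ℝ).hasFDerivAt
  have hinv := (hasDerivAt_inv hG).comp_hasFDerivAt q (hasFDerivAt_cesPriceSum (a := a) hq)
  refine ⟨_, (hnum.mul hinv).congr_of_eventuallyEq (.of_eq (funext fun w => div_eq_mul_inv _ _)),
    ?_⟩
  simp only [Function.comp_apply, ContinuousLinearMap.proj_apply, neg_smul, smul_neg, add_apply,
    neg_apply, smul_apply, coordForm_single, smul_eq_mul, Pi.single_eq_of_ne hjk.symm, mul_zero,
    add_zero, cesDemand, neg_inj]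
  field_simp

end Calculus

lemma rpow_le_rpow_abs_mul_rpow {x y r s : ℝ} (hx : 0 < x) (hy : 0 < y) (hr0 : 0 < r)
    (hxy : x ≤ r * y) (hyx : y ≤ r * x) : x ^ s ≤ r ^ |s| * y ^ s := by
  rcases le_or_gt 0 s with hs | hs
  · rw [abs_of_nonneg hs, ← mul_rpow hr0.le hy.le]
    exact rpow_le_rpow hx.le hxy hs
  · rw [abs_of_neg hs]
    calc x ^ s ≤ (y / r) ^ s :=
          rpow_le_rpow_of_nonpos (div_pos hy hr0) ((div_le_iff₀ hr0).2 (by linarith)) hs.le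
      _ = r ^ (-s) * y ^ s := by rw [div_rpow hy.le hr0.le, rpow_neg hr0.le]; ring

lemma cesDemand_le_rpow_mul_cesDemand {n : ℕ} {a : Fin n → ℝ} {ρ e r : ℝ} {p p' : Fin n → ℝ}
    (hρ : ρ < 1) (ha : ∀ j, 0 ≤ a j) (ha0 : ∃ j, a j ≠ 0) (he : 0 ≤ e) (hp : ∀ j, 0 < p j)
    (hp' : ∀ j, 0 < p' j) (hr : 0 < r) (hpp' : ∀ k, p k ≤ r * p' k) (hp'p : ∀ k, p' k ≤ r * p k)
    (j : Fin n) :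
    cesDemand a ρ e p' j ≤ r ^ (1 - cesTheta ρ + |cesTheta ρ|) * cesDemand a ρ e p j := by
  have hG := cesPriceSum_pos (ρ := ρ) ha ha0 hp
  have hG' := cesPriceSum_pos (ρ := ρ) ha ha0 hp'
  have hnum : p' j ^ (cesTheta ρ - 1) ≤ r ^ (1 - cesTheta ρ) * p j ^ (cesTheta ρ - 1) := by
    have := rpow_le_rpow_abs_mul_rpow (s := cesTheta ρ - 1) (hp' j) (hp j) hr (hp'p j) (hpp' j)
    rwa [abs_of_neg (by linarith [cesTheta_lt_one hρ]), neg_sub] at this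
  have hden : cesPriceSum a ρ p ≤ r ^ |cesTheta ρ| * cesPriceSum a ρ p' := by
    rw [cesPriceSum, cesPriceSum, mul_sum]
    refine sum_le_sum fun k _ => ?_
    have := mul_le_mul_of_nonneg_left (rpow_le_rpow_abs_mul_rpow (s := cesTheta ρ) (hp k) (hp' k)
      hr (hpp' k) (hp'p k)) (cesWeight_nonneg (ρ := ρ) ha k)
    linarith
  set K := e * cesWeight a ρ j * p j ^ (cesTheta ρ - 1)
  have hK : 0 ≤ K := mul_nonneg (mul_nonneg he (cesWeight_nonneg ha j)) (rpow_nonneg (hp j).le _)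
  calc cesDemand a ρ e p' j
      ≤ e * (cesWeight a ρ j * (r ^ (1 - cesTheta ρ) * p j ^ (cesTheta ρ - 1)))
          / cesPriceSum a ρ p' := by
        rw [cesDemand]
        gcongr
        exact cesWeight_nonneg ha j
    _ = r ^ (1 - cesTheta ρ) * K / cesPriceSum a ρ p' := by ring
    _ ≤ r ^ (1 - cesTheta ρ) * K * r ^ |cesTheta ρ| / cesPriceSum a ρ p := by
        rw [div_le_div_iff₀ hG' hG]
        have := mul_le_mul_of_nonneg_left hden
          (mul_nonneg (rpow_nonneg hr.le (1 - cesTheta ρ)) hK)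
        linarith
    _ = r ^ (1 - cesTheta ρ + |cesTheta ρ|) * cesDemand a ρ e p j := by
        rw [rpow_add hr, cesDemand]
        ring

namespace CESMarket

variable {n m : ℕ} (M : CESMarket n m)

-- With Lean's `0 ^ ρ = 0`, for `ρ < 0` spending the whole budget on any one liked good is
-- optimal at suitable prices, so uniqueness of demand leaves room for only one liked good.
lemma support_subsingleton_of_neg {i : Fin m} (hneg : M.ρ i < 0) :
    (Function.support (M.a i)).Subsingleton := by
  intro j hj k hk
  by_contra hjk
  set q : Fin n → ℝ := fun t => if M.a i t = 0 then 1 else M.a i t ^ (1 / M.ρ i)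
  have hq : ∀ t, 0 < q t := fun t => by
    by_cases ht : M.a i t = 0
    · simp [q, ht]
    · simpa [q, ht] using rpow_pos_of_pos ((M.a_nonneg i t).lt_of_ne' ht) (1 / M.ρ i)
  have hqa : ∀ t, M.a i t ≠ 0 → M.a i t ^ (1 / M.ρ i) = q t := fun t ht => by simp [q, ht]
  have hx : ∀ l, M.a i l ≠ 0 → Pi.single l (M.e i / q l) = M.x q i := fun l hl =>
    M.x_unique q hq i _ (isDemand_single_of_neg hneg (M.a_nonneg i) (M.e_pos i).le hq hqa hl)
  have hjj := congrFun ((hx j hj).trans (hx k hk).symm) j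
  rw [Pi.single_eq_same, Pi.single_eq_of_ne hjk] at hjj
  exact (div_pos (M.e_pos i) (hq j)).ne' hjj

lemma x_eq_cesDemand {p : Fin n → ℝ} (hp : ∀ j, 0 < p j) (i : Fin m) :
    M.x p i = cesDemand (M.a i) (M.ρ i) (M.e i) p :=
  (M.x_unique p hp i _ (isDemand_cesDemand (M.ρ_lt_one i) (M.ρ_ne_zero i) (M.a_nonneg i)
    (M.a_ne_zero i) (M.e_pos i).le hp fun hneg => M.support_subsingleton_of_neg hneg)).symm

noncomputable def potential (q : Fin n → ℝ) : ℝ :=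
  ∑ k, q k + ∑ i, M.e i * ((1 - M.ρ i) / M.ρ i * log (cesPriceSum (M.a i) (M.ρ i) q))

lemma phi_eventuallyEq_potential {q : Fin n → ℝ} (hq : ∀ j, 0 < q j) :
    phi M =ᶠ[𝓝 q] M.potential := by
  filter_upwards [eventually_pos_nhds hq] with w hw
  rw [phi, potential]
  congr 1
  refine sum_congr rfl fun i _ => ?_
  rw [uhat_eq (M.ρ_lt_one i) (M.ρ_ne_zero i) (M.a_nonneg i) (M.a_ne_zero i) hw
      fun hneg => M.support_subsingleton_of_neg hneg,
    log_rpow (cesPriceSum_pos (M.a_nonneg i) (M.a_ne_zero i) hw)]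

lemma partialDeriv'_potential {q : Fin n → ℝ} (hq : ∀ j, 0 < q j) (k : Fin n) :
    partialDeriv' M.potential k q = 1 - ∑ i, M.x q i k := by
  have hG := fun i => cesPriceSum_pos (ρ := M.ρ i) (M.a_nonneg i) (M.a_ne_zero i) hq
  have H : HasFDerivAt M.potential _ q :=
    (hasFDerivAt_sum_apply fun l => hasDerivAt_id' (q l)).add <| HasFDerivAt.fun_sum fun i _ =>
      (((hasDerivAt_log (hG i).ne').comp_hasFDerivAt q
        (hasFDerivAt_cesPriceSum (a := M.a i) hq)).const_mul _).const_mul (M.e i)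
  rw [partialDeriv', H.fderiv]
  simp only [sub_eq_add_neg, add_apply, coordForm_single, _root_.sum_apply, smul_apply,
    smul_eq_mul, ← sum_neg_distrib, add_right_inj]
  refine sum_congr rfl fun i _ => ?_
  rw [M.x_eq_cesDemand hq, cesDemand]
  linear_combination (M.e i * cesWeight (M.a i) (M.ρ i) k * q k ^ (cesTheta (M.ρ i) - 1) /
    cesPriceSum (M.a i) (M.ρ i) q) * one_sub_div_mul_cesTheta (M.ρ_lt_one i) (M.ρ_ne_zero i)

lemma secondPartial_phi {q : Fin n → ℝ} (hq : ∀ j, 0 < q j) {j k : Fin n} (hjk : j ≠ k) :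
    secondPartial (phi M) j k q = ∑ i, cesTheta (M.ρ i) * M.x q i j * M.x q i k / M.e i := by
  have hfirst : partialDeriv' (phi M) k
      =ᶠ[𝓝 q] fun w => 1 - ∑ i, cesDemand (M.a i) (M.ρ i) (M.e i) w k := by
    filter_upwards [eventually_pos_nhds hq] with w hw
    rw [partialDeriv', (M.phi_eventuallyEq_potential hw).fderiv_eq, ← partialDeriv',
      M.partialDeriv'_potential hw]
    simp only [M.x_eq_cesDemand hw]
  choose D hD hDj using fun i => exists_hasFDerivAt_cesDemand (M.e_pos i).ne' hq
    (cesPriceSum_pos (ρ := M.ρ i) (M.a_nonneg i) (M.a_ne_zero i) hq).ne' hjk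
  rw [secondPartial, partialDeriv', hfirst.fderiv_eq,
    ((HasFDerivAt.fun_sum fun i _ => hD i).const_sub 1).fderiv]
  simp only [neg_apply, _root_.sum_apply, hDj, sum_neg_distrib, neg_neg, M.x_eq_cesDemand hq]

lemma sum_abs_secondPartial_phi_le {q w : Fin n → ℝ} (hq : ∀ j, 0 < q j) (hw : ∀ k, 0 ≤ w k)
    {θ c : ℝ} (hθ : ∀ i, |cesTheta (M.ρ i)| ≤ θ) (j : Fin n)
    (hc : ∀ i, ∑ k ∈ univ.erase j, M.x q i k * w k ≤ c * M.e i) :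
    ∑ k ∈ univ.erase j, |secondPartial (phi M) j k q| * w k ≤ θ * c * ∑ i, M.x q i j := by
  have hx : ∀ i k, 0 ≤ M.x q i k := fun i => (M.x_isDemand q hq i).1.1
  have hterm : ∀ i k, |cesTheta (M.ρ i) * M.x q i j * M.x q i k / M.e i| * w k
      ≤ θ * (M.x q i j / M.e i) * (M.x q i k * w k) := fun i k => by
    rw [abs_div, abs_mul, abs_mul, abs_of_nonneg (hx i j), abs_of_nonneg (hx i k),
      abs_of_pos (M.e_pos i)]
    calc _ = |cesTheta (M.ρ i)| * (M.x q i j / M.e i * (M.x q i k * w k)) := by ring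
      _ ≤ θ * (M.x q i j / M.e i * (M.x q i k * w k)) :=
          mul_le_mul_of_nonneg_right (hθ i)
            (mul_nonneg (div_nonneg (hx i j) (M.e_pos i).le) (mul_nonneg (hx i k) (hw k)))
      _ = _ := by ring
  calc ∑ k ∈ univ.erase j, |secondPartial (phi M) j k q| * w k
      ≤ ∑ k ∈ univ.erase j, ∑ i, θ * (M.x q i j / M.e i) * (M.x q i k * w k) := by
        refine sum_le_sum fun k hk => ?_
        rw [M.secondPartial_phi hq (ne_of_mem_erase hk).symm]
        exact (mul_le_mul_of_nonneg_right (abs_sum_le_sum_abs _ _) (hw k)).trans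
          (by rw [sum_mul]; exact sum_le_sum fun i _ => hterm i k)
    _ = ∑ i, θ * (M.x q i j / M.e i) * ∑ k ∈ univ.erase j, M.x q i k * w k := by
        rw [sum_comm]
        simp only [mul_sum]
    _ ≤ ∑ i, θ * (M.x q i j / M.e i) * (c * M.e i) :=
        sum_le_sum fun i _ => mul_le_mul_of_nonneg_left (hc i)
          (mul_nonneg ((abs_nonneg _).trans (hθ i)) (div_nonneg (hx i j) (M.e_pos i).le))
    _ = θ * c * ∑ i, M.x q i j := by
        rw [mul_sum]
        refine sum_congr rfl fun i _ => ?_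
        field_simp [(M.e_pos i).ne']

lemma x_le_rpow_mul_x {p p' : Fin n → ℝ} {r : ℝ} (hp : ∀ j, 0 < p j) (hp' : ∀ j, 0 < p' j)
    (hr : 0 < r) (hpp' : ∀ k, p k ≤ r * p' k) (hp'p : ∀ k, p' k ≤ r * p k) (i : Fin m)
    (j : Fin n) :
    M.x p' i j ≤ r ^ (1 - cesTheta (M.ρ i) + |cesTheta (M.ρ i)|) * M.x p i j := by
  rw [M.x_eq_cesDemand hp, M.x_eq_cesDemand hp']
  exact cesDemand_le_rpow_mul_cesDemand (M.ρ_lt_one i) (M.a_nonneg i) (M.a_ne_zero i)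
    (M.e_pos i).le hp hp' hr hpp' hp'p j

end CESMarket

/-- in a CES Fisher market, with `ρ := max_i ρ_i`,
`θ := max{ρ/(1−ρ), 1}` and `E := max{1/(1−ρ), 1}`, for positive prices `p`, `r ≥ 1`,
and any positive prices `p'` with `p_k/r ≤ p'_k ≤ r·p_k` for all `k`, one has
`∑_{k ≠ j} |∂²φ/∂p_j∂p_k(p')|·p_k ≤ θ·r^{2E}·x_j(p)` for every good `j`. -/
theorem stmt_8 (n m : ℕ) (M : CESMarket n m)
    (ρbar θ E : ℝ) (hρbar : IsGreatest (Set.range M.ρ) ρbar)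
    (hθ : θ = max (ρbar / (1 - ρbar)) 1) (hE : E = max (1 / (1 - ρbar)) 1)
    (p p' : Fin n → ℝ) (hp : ∀ j, 0 < p j) (hp' : ∀ j, 0 < p' j)
    (r : ℝ) (hr : 1 ≤ r)
    (hlo : ∀ k, p k / r ≤ p' k) (hhi : ∀ k, p' k ≤ r * p k) (j : Fin n) :
    ∑ k ∈ Finset.univ.erase j, |secondPartial (phi M) j k p'| * p k ≤
      θ * r ^ (2 * E) * totalDemand M p j := by
  obtain ⟨⟨i₀, rfl⟩, hmax⟩ := hρbar
  have hρ : ∀ i, M.ρ i ≤ M.ρ i₀ := fun i => hmax ⟨i, rfl⟩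
  have hr0 : 0 < r := by linarith
  have hpp' : ∀ k, p k ≤ r * p' k := fun k => by
    rw [mul_comm, ← div_le_iff₀ hr0]; exact hlo k
  have hθ0 : 0 ≤ θ := hθ ▸ zero_le_one.trans (le_max_right _ _)
  calc ∑ k ∈ univ.erase j, |secondPartial (phi M) j k p'| * p k
      ≤ θ * r * ∑ i, M.x p' i j :=
        M.sum_abs_secondPartial_phi_le hp' (fun k => (hp k).le)
          (fun i => hθ ▸ abs_cesTheta_le (M.ρ_lt_one i₀) (hρ i)) j fun i =>
          sum_mul_le_of_mem_budgetSet _ (M.x_isDemand p' hp' i).1 (fun k => (hp k).le) hr0.le hpp'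
    _ ≤ θ * r * ∑ i, r ^ (2 * E - 1) * M.x p i j := by
        refine mul_le_mul_of_nonneg_left (sum_le_sum fun i _ => ?_) (mul_nonneg hθ0 hr0.le)
        refine (M.x_le_rpow_mul_x hp hp' hr0 hpp' hhi i j).trans
          (mul_le_mul_of_nonneg_right (rpow_le_rpow_of_exponent_le hr ?_)
            ((M.x_isDemand p hp i).1.1 j))
        exact hE ▸ one_sub_cesTheta_add_abs_le (M.ρ_lt_one i₀) (hρ i)
    _ = θ * r ^ (2 * E) * totalDemand M p j := by
        have hrr : r ^ (2 * E) = r * r ^ (2 * E - 1) := by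
          rw [mul_comm r, ← rpow_add_one hr0.ne', sub_add_cancel]
        rw [totalDemand, ← mul_sum, hrr]
        ring
end

section
/- Let λ ∈ (0, 1/10], U > 0, ε ∈ (0,1], and m ≥ 1. Let Δt_1, …, Δt_m > 0 with ∑_{q=1}^m Δt_q ≤ 2, let z̃_1, …, z̃_m ∈ ℝ, and let p_0, …, p_m be defined by p_q = p_{q−1}·(1 + λ·min{z̃_q, 1}·Δt_q), where 0 < p_{q−1} ≤ U for each q. Set Γ_q := max{1, z̃_q}/(λ·p_{q−1}) and Δp_q := p_q − p_{q−1}. Suppose Φ_0, Φ_1, …, Φ_m are real numbers satisfying Φ_{q−1} − Φ_q ≥ (Γ_q/8)·(Δp_q)²/Δt_q for each q. If |p_0 − p_m| ≥ ε, then Φ_0 − Φ_m ≥ ε²·min{1/16, 1/(64λU)}. -/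
/-- consecutive tatonnement updates to the price of one good,
with prices bounded by `U`, potential decreasing by at least
`(Γ_q/8)·(Δp_q)²/Δt_q` at each update, where `Γ_q = max{1, z̃_q}/(λ·p_{q−1})`.
If the total price movement is at least `ε`, then the potential drops by at
least `ε²·min{1/16, 1/(64λU)}`. -/
theorem stmt_14 (lam U ε : ℝ) (m : ℕ)
    (hlam0 : 0 < lam) (hlam1 : lam ≤ 1 / 10) (hU : 0 < U)
    (hε0 : 0 < ε) (hε1 : ε ≤ 1) (hm : 1 ≤ m)
    (Δt zt : ℕ → ℝ) (p Φ : ℕ → ℝ)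
    (hΔt : ∀ q, 1 ≤ q → q ≤ m → 0 < Δt q)
    (hsum : ∑ q ∈ Finset.Icc 1 m, Δt q ≤ 2)
    (hrec : ∀ q, 1 ≤ q → q ≤ m →
      p q = p (q - 1) * (1 + lam * min (zt q) 1 * Δt q))
    (hbound : ∀ q, 1 ≤ q → q ≤ m → 0 < p (q - 1) ∧ p (q - 1) ≤ U)
    (hΦ : ∀ q, 1 ≤ q → q ≤ m →
      Φ (q - 1) - Φ q ≥
        max 1 (zt q) / (lam * p (q - 1)) / 8 * (p q - p (q - 1)) ^ 2 / Δt q)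
    (hgap : |p 0 - p m| ≥ ε) :
    Φ 0 - Φ m ≥ ε ^ 2 * min (1 / 16) (1 / (64 * lam * U)) := by
  have hlu : 0 < lam * U := mul_pos hlam0 hU
  have htpos : ∀ i ∈ Finset.range m, 0 < Δt (i + 1) := fun i hi =>
    hΔt (i + 1) (Nat.le_add_left 1 i) (Finset.mem_range.mp hi)
  set S : ℝ := ∑ i ∈ Finset.range m, (p (i + 1) - p i) ^ 2 / Δt (i + 1) with hSdef
  have hSnn : 0 ≤ S := Finset.sum_nonneg fun i hi =>
    div_nonneg (sq_nonneg _) (htpos i hi).le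
  -- total time is at most 2
  have hsum' : ∑ i ∈ Finset.range m, Δt (i + 1) ≤ 2 := by
    have h : ∑ q ∈ Finset.Icc 1 m, Δt q = ∑ i ∈ Finset.range m, Δt (i + 1) := by
      rw [← Finset.Ico_add_one_right_eq_Icc, Finset.sum_Ico_eq_sum_range]
      simp [add_comm]
    linarith [hsum, h.ge]
  -- lower bound on total movement
  have hB : ε ≤ ∑ i ∈ Finset.range m, |p (i + 1) - p i| := by
    calc ε ≤ |p 0 - p m| := hgap
      _ = |∑ i ∈ Finset.range m, (p i - p (i + 1))| := by
            rw [Finset.sum_range_sub' p m]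
      _ ≤ ∑ i ∈ Finset.range m, |p i - p (i + 1)| :=
            Finset.abs_sum_le_sum_abs _ _
      _ = ∑ i ∈ Finset.range m, |p (i + 1) - p i| := by
            exact Finset.sum_congr rfl fun i _ => abs_sub_comm _ _
  -- Cauchy–Schwarz
  have hC : ε ^ 2 ≤ 2 * S := by
    have key := Finset.sum_mul_sq_le_sq_mul_sq (Finset.range m)
      (fun i => Real.sqrt (Δt (i + 1)))
      (fun i => |p (i + 1) - p i| / Real.sqrt (Δt (i + 1)))
    have e1 : ∑ i ∈ Finset.range m,
        Real.sqrt (Δt (i + 1)) * (|p (i + 1) - p i| / Real.sqrt (Δt (i + 1)))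
        = ∑ i ∈ Finset.range m, |p (i + 1) - p i| := by
      refine Finset.sum_congr rfl fun i hi => ?_
      have h0 : Real.sqrt (Δt (i + 1)) ≠ 0 :=
        ne_of_gt (Real.sqrt_pos.mpr (htpos i hi))
      field_simp
    have e2 : ∑ i ∈ Finset.range m, Real.sqrt (Δt (i + 1)) ^ 2
        = ∑ i ∈ Finset.range m, Δt (i + 1) := by
      refine Finset.sum_congr rfl fun i hi => ?_
      exact Real.sq_sqrt (htpos i hi).le
    have e3 : ∑ i ∈ Finset.range m,
        (|p (i + 1) - p i| / Real.sqrt (Δt (i + 1))) ^ 2 = S := by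
      refine Finset.sum_congr rfl fun i hi => ?_
      rw [div_pow, Real.sq_sqrt (htpos i hi).le, sq_abs]
    rw [e1, e2, e3] at key
    have h4 : ε ^ 2 ≤ (∑ i ∈ Finset.range m, |p (i + 1) - p i|) ^ 2 := by
      have := Finset.sum_nonneg (s := Finset.range m)
        (f := fun i => |p (i + 1) - p i|) (fun i _ => abs_nonneg _)
      nlinarith
    have h5 : (∑ i ∈ Finset.range m, Δt (i + 1)) * S ≤ 2 * S :=
      mul_le_mul_of_nonneg_right hsum' hSnn
    linarith
  -- potential drop bound
  have hA : S / (8 * lam * U) ≤ Φ 0 - Φ m := by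
    rw [← Finset.sum_range_sub' Φ m, hSdef, Finset.sum_div]
    refine Finset.sum_le_sum fun i hi => ?_
    have him : i < m := Finset.mem_range.mp hi
    have hq := hΦ (i + 1) (Nat.le_add_left 1 i) him
    have hb := hbound (i + 1) (Nat.le_add_left 1 i) him
    simp only [Nat.add_sub_cancel] at hq hb
    have hti : 0 < Δt (i + 1) := htpos i hi
    have hlp : 0 < lam * p i := mul_pos hlam0 hb.1
    have hc : 1 / (8 * lam * U) ≤ max 1 (zt (i + 1)) / (lam * p i) / 8 := by
      have h2 : lam * p i ≤ lam * U := mul_le_mul_of_nonneg_left hb.2 hlam0.le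
      have h3 : 1 / (lam * U) ≤ 1 / (lam * p i) :=
        one_div_le_one_div_of_le hlp h2
      have h4 : 1 / (lam * p i) ≤ max 1 (zt (i + 1)) / (lam * p i) := by
        gcongr
        exact le_max_left _ _
      calc 1 / (8 * lam * U) = 1 / (lam * U) / 8 := by ring
        _ ≤ 1 / (lam * p i) / 8 := by linarith
        _ ≤ max 1 (zt (i + 1)) / (lam * p i) / 8 := by linarith
    have hdd : 0 ≤ (p (i + 1) - p i) ^ 2 / Δt (i + 1) :=
      div_nonneg (sq_nonneg _) hti.le
    have hmul := mul_le_mul_of_nonneg_left hc hdd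
    calc (p (i + 1) - p i) ^ 2 / Δt (i + 1) / (8 * lam * U)
        = (p (i + 1) - p i) ^ 2 / Δt (i + 1) * (1 / (8 * lam * U)) := by ring
      _ ≤ (p (i + 1) - p i) ^ 2 / Δt (i + 1)
            * (max 1 (zt (i + 1)) / (lam * p i) / 8) := hmul
      _ = max 1 (zt (i + 1)) / (lam * p i) / 8 * (p (i + 1) - p i) ^ 2
            / Δt (i + 1) := by ring
      _ ≤ Φ i - Φ (i + 1) := hq
  -- finish
  have hA' : S ≤ (Φ 0 - Φ m) * (8 * lam * U) := by
    rwa [div_le_iff₀ (by positivity)] at hA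
  have hmin : min (1 / 16) (1 / (64 * lam * U)) ≤ 1 / (64 * lam * U) :=
    min_le_right _ _
  have h6 : ε ^ 2 * min (1 / 16) (1 / (64 * lam * U))
      ≤ ε ^ 2 * (1 / (64 * lam * U)) :=
    mul_le_mul_of_nonneg_left hmin (sq_nonneg ε)
  have h7 : ε ^ 2 * (1 / (64 * lam * U)) ≤ Φ 0 - Φ m := by
    rw [mul_one_div, div_le_iff₀ (by positivity)]
    nlinarith
  linarith
end

section
/- Let n,m ≥ 1 and consider a Fisher market in which every buyer i has a Leontief utility, and an asynchronous tatonnement with step-size parameter λ ≤ 1/25.5 starting from a positive price vector p°. Then for every ε > 0 there exists a finite time T_ε such that for every good j, every t ≥ T_ε, and every Δt ∈ [0,1], |p_j(t) − p_j(t + Δt)| ≤ ε. -/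
open Finset

/-- A Fisher market with `n` goods (each of unit supply) and `m` buyers having
Leontief utilities `u_i(x) = min_{j : c_{ij}>0} x_j/c_{ij}`: buyer `i` has
coefficients `c i` (non-negative, not all zero) and budget `e i > 0`. -/
structure LeontiefMarket (n m : ℕ) where
  c : Fin m → Fin n → ℝ
  e : Fin m → ℝ
  c_nonneg : ∀ i j, 0 ≤ c i j
  c_ne_zero : ∀ i, ∃ j, c i j ≠ 0
  e_pos : ∀ i, 0 < e i

/-- Buyer `i`'s demand for good `j` at prices `p`:
`x_{ij}(p) = e_i·c_{ij} / ∑_k c_{ik}·p_k`. -/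
noncomputable def ldemand {n m : ℕ} (M : LeontiefMarket n m) (p : Fin n → ℝ)
    (i : Fin m) (j : Fin n) : ℝ :=
  M.e i * M.c i j / ∑ k, M.c i k * p k

/-- Excess demand for good `j` at prices `p` (supply of each good is one unit). -/
noncomputable def lexcess {n m : ℕ} (M : LeontiefMarket n m) (p : Fin n → ℝ)
    (j : Fin n) : ℝ :=
  (∑ i, ldemand M p i j) - 1

/-- `p` is a market equilibrium of the Leontief Fisher market: prices are
non-negative, each buyer's demand is finite (her bundle cost `∑_k c_{ik}·p_k`
is positive, so no excess demand is `+∞`), every positively-priced good exactly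
clears, and every zero-priced good is not over-demanded. -/
def IsLeontiefEquilibrium {n m : ℕ} (M : LeontiefMarket n m)
    (p : Fin n → ℝ) : Prop :=
  (∀ j, 0 ≤ p j) ∧ (∀ i, 0 < ∑ k, M.c i k * p k) ∧
  ∀ j, (0 < p j → lexcess M p j = 0) ∧ (p j = 0 → lexcess M p j ≤ 0)

/-- An asynchronous tatonnement for excess-demand function `z`, step-size parameter
`lam`, and initial prices `p0`.  `T k` (for `k ≥ 1`) is the increasing unbounded
sequence of update times (`T 0 = 0`), `g (k+1)` is the good updated at time `T (k+1)`,
`P k` is the price vector after the first `k` updates, `traj` is the resulting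
piecewise-constant price trajectory, and `prevT (k+1)` is the time of the previous
update to the same good (or `0` if none).  Each update multiplies the price by
`1 + lam · min{z̃,1} · (t − α_j(t))`, where `z̃` lies between the minimum and maximum
of the instantaneous excess demand of that good over the open interval since the
previous update, and `t − α_j(t) ≤ 1`. -/
structure Tatonnement (n : ℕ) (z : (Fin n → ℝ) → Fin n → ℝ) (lam : ℝ)
    (p0 : Fin n → ℝ) where
  T : ℕ → ℝ
  g : ℕ → Fin n
  P : ℕ → Fin n → ℝ
  traj : ℝ → Fin n → ℝ
  T_zero : T 0 = 0
  T_mono : StrictMono T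
  T_unbounded : ∀ M : ℝ, ∃ k, M < T k
  P_zero : P 0 = p0
  prevT : ℕ → ℝ
  prevT_spec : ∀ k : ℕ,
    (∃ l, 1 ≤ l ∧ l ≤ k ∧ g l = g (k + 1) ∧ prevT (k + 1) = T l ∧
      ∀ l', l < l' → l' ≤ k → g l' ≠ g (k + 1)) ∨
    ((∀ l, 1 ≤ l → l ≤ k → g l ≠ g (k + 1)) ∧ prevT (k + 1) = 0)
  gap_le_one : ∀ k : ℕ, T (k + 1) - prevT (k + 1) ≤ 1
  traj_eq : ∀ k : ℕ, ∀ s : ℝ, T k ≤ s → s < T (k + 1) → traj s = P k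
  update_other : ∀ k : ℕ, ∀ j, j ≠ g (k + 1) → P (k + 1) j = P k j
  update_rule : ∀ k : ℕ, ∃ zt : ℝ,
    (∃ s₁, prevT (k + 1) < s₁ ∧ s₁ < T (k + 1) ∧ z (traj s₁) (g (k + 1)) ≤ zt) ∧
    (∃ s₂, prevT (k + 1) < s₂ ∧ s₂ < T (k + 1) ∧ zt ≤ z (traj s₂) (g (k + 1))) ∧
    P (k + 1) (g (k + 1)) =
      P k (g (k + 1)) * (1 + lam * min zt 1 * (T (k + 1) - prevT (k + 1)))

/-- `q` is a limit point of the price trajectory `traj` as `t → ∞`. -/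
def IsLimitPoint {n : ℕ} (traj : ℝ → Fin n → ℝ) (q : Fin n → ℝ) : Prop :=
  ∃ ts : ℕ → ℝ, Filter.Tendsto ts Filter.atTop Filter.atTop ∧
    Filter.Tendsto (fun s => traj (ts s)) Filter.atTop (nhds q)


section Aux

open Real

namespace S15

variable {n m : ℕ} (M : LeontiefMarket n m)

/-- bundle cost of buyer `i`. -/
noncomputable def S (p : Fin n → ℝ) (i : Fin m) : ℝ := ∑ k, M.c i k * p k

/-- demand-plus-one function `a p j = lexcess M p j + 1`. -/
noncomputable def A (p : Fin n → ℝ) (j : Fin n) : ℝ :=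
  ∑ i, M.e i * M.c i j / S M p i

/-- potential function. -/
noncomputable def phi (p : Fin n → ℝ) : ℝ :=
  (∑ j, p j) - ∑ i, M.e i * Real.log (S M p i)

/-- Hessian-type kernel. -/
noncomputable def G (p : Fin n → ℝ) (j j' : Fin n) : ℝ :=
  ∑ i, M.e i * M.c i j * M.c i j' * p j * p j' / (S M p i) ^ 2

lemma S_pos {p : Fin n → ℝ} (hp : ∀ j, 0 < p j) (i : Fin m) : 0 < S M p i := by
  obtain ⟨j, hj⟩ := M.c_ne_zero i
  have hj' : 0 < M.c i j := lt_of_le_of_ne (M.c_nonneg i j) (Ne.symm hj)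
  have : 0 < M.c i j * p j := mul_pos hj' (hp j)
  have hle : M.c i j * p j ≤ S M p i := by
    apply Finset.single_le_sum (f := fun k => M.c i k * p k) _ (Finset.mem_univ j)
    intro k _
    exact mul_nonneg (M.c_nonneg i k) (hp k).le
  linarith

lemma lexcess_eq_A {p : Fin n → ℝ} (j : Fin n) : lexcess M p j = A M p j - 1 := by
  simp [lexcess, A, ldemand, S]

lemma A_nonneg {p : Fin n → ℝ} (hp : ∀ j, 0 < p j) (j : Fin n) : 0 ≤ A M p j := by
  apply Finset.sum_nonneg
  intro i _
  exact div_nonneg (mul_nonneg (M.e_pos i).le (M.c_nonneg i j)) (S_pos M hp i).le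

lemma A_le {p : Fin n → ℝ} (hp : ∀ j, 0 < p j) (j : Fin n) :
    A M p j ≤ (∑ i, M.e i) / p j := by
  rw [Finset.sum_div]
  apply Finset.sum_le_sum
  intro i _
  have hS : 0 < S M p i := S_pos M hp i
  rcases eq_or_lt_of_le (M.c_nonneg i j) with h0 | h0
  · rw [← h0]
    simp
    have := (M.e_pos i).le
    have := (hp j).le
    positivity
  · have hle : M.c i j * p j ≤ S M p i := by
      apply Finset.single_le_sum (f := fun k => M.c i k * p k) _ (Finset.mem_univ j)
      intro k _
      exact mul_nonneg (M.c_nonneg i k) (hp k).le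
    rw [div_le_div_iff₀ hS (hp j)]
    calc M.e i * M.c i j * p j = M.e i * (M.c i j * p j) := by ring
    _ ≤ M.e i * S M p i := by
        apply mul_le_mul_of_nonneg_left hle (M.e_pos i).le

lemma G_nonneg {p : Fin n → ℝ} (hp : ∀ j, 0 ≤ p j) (j j' : Fin n) : 0 ≤ G M p j j' := by
  apply Finset.sum_nonneg
  intro i _
  have := M.e_pos i
  have := M.c_nonneg i j
  have := M.c_nonneg i j'
  have := hp j
  have := hp j'
  positivity

lemma G_symm (p : Fin n → ℝ) (j j' : Fin n) : G M p j j' = G M p j' j := by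
  unfold G
  apply Finset.sum_congr rfl
  intro i _
  ring

lemma G_row_sum {p : Fin n → ℝ} (hp : ∀ j, 0 < p j) (j : Fin n) :
    ∑ j', G M p j j' = p j * A M p j := by
  unfold G A
  rw [Finset.sum_comm, Finset.mul_sum]
  apply Finset.sum_congr rfl
  intro i _
  have hS := (S_pos M hp i).ne'
  have : ∑ j', M.e i * M.c i j * M.c i j' * p j * p j' / S M p i ^ 2
      = (M.e i * M.c i j * p j / S M p i ^ 2) * ∑ j', M.c i j' * p j' := by
    rw [Finset.mul_sum]
    apply Finset.sum_congr rfl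
    intro j' _
    ring
  rw [this]
  show (M.e i * M.c i j * p j / S M p i ^ 2) * S M p i = _
  field_simp

section Tat

variable {n m : ℕ} {M : LeontiefMarket n m} {lam : ℝ} {p0 : Fin n → ℝ}
variable (tat : Tatonnement n (lexcess M) lam p0)

/-- the sampled excess demand value used in step `k`. -/
noncomputable def zt (k : ℕ) : ℝ := (tat.update_rule k).choose

/-- the clipped multiplier. -/
noncomputable def mt (k : ℕ) : ℝ := min (zt tat k) 1

/-- the elapsed time of step `k`. -/
noncomputable def De (k : ℕ) : ℝ := tat.T (k+1) - tat.prevT (k+1)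

/-- the good updated in step `k`. -/
def Jg (k : ℕ) : Fin n := tat.g (k+1)

lemma zt_spec (k : ℕ) :
    (∃ s₁, tat.prevT (k+1) < s₁ ∧ s₁ < tat.T (k+1) ∧
      lexcess M (tat.traj s₁) (Jg tat k) ≤ zt tat k) ∧
    (∃ s₂, tat.prevT (k+1) < s₂ ∧ s₂ < tat.T (k+1) ∧
      zt tat k ≤ lexcess M (tat.traj s₂) (Jg tat k)) ∧
    tat.P (k+1) (Jg tat k) = tat.P k (Jg tat k) * (1 + lam * mt tat k * De tat k) :=
  (tat.update_rule k).choose_spec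

open Classical in
/-- index of the previous update of the same good (`0` if none). -/
noncomputable def Lk (k : ℕ) : ℕ :=
  if h : ∃ l, 1 ≤ l ∧ l ≤ k ∧ tat.g l = tat.g (k+1) ∧ tat.prevT (k+1) = tat.T l ∧
      ∀ l', l < l' → l' ≤ k → tat.g l' ≠ tat.g (k+1) then h.choose else 0

lemma Lk_spec (k : ℕ) : Lk tat k ≤ k ∧ tat.prevT (k+1) = tat.T (Lk tat k) ∧
    (∀ r, Lk tat k < r → r ≤ k → tat.g r ≠ tat.g (k+1)) ∧
    (1 ≤ Lk tat k → tat.g (Lk tat k) = tat.g (k+1)) := by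
  unfold Lk
  split_ifs with h
  · obtain ⟨h1, h2, h3, h4, h5⟩ := h.choose_spec
    exact ⟨h2, h4, h5, fun _ => h3⟩
  · rcases tat.prevT_spec k with hc | hc
    · exact absurd hc h
    · refine ⟨Nat.zero_le k, by rw [hc.2, tat.T_zero], ?_, by omega⟩
      intro r hr hrk
      exact hc.1 r hr hrk

lemma Lk_le (k : ℕ) : Lk tat k ≤ k := (Lk_spec tat k).1
lemma prevT_eq (k : ℕ) : tat.prevT (k+1) = tat.T (Lk tat k) := (Lk_spec tat k).2.1
lemma Lk_max (k : ℕ) : ∀ r, Lk tat k < r → r ≤ k → tat.g r ≠ tat.g (k+1) :=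
  (Lk_spec tat k).2.2.1
lemma Lk_good (k : ℕ) (h : 1 ≤ Lk tat k) : tat.g (Lk tat k) = tat.g (k+1) :=
  (Lk_spec tat k).2.2.2 h

lemma T_nonneg (k : ℕ) : 0 ≤ tat.T k := by
  have := tat.T_mono.monotone (Nat.zero_le k)
  rwa [tat.T_zero] at this

lemma De_pos (k : ℕ) : 0 < De tat k := by
  have h := prevT_eq tat k
  have : tat.T (Lk tat k) < tat.T (k+1) :=
    tat.T_mono (Nat.lt_succ_of_le (Lk_le tat k))
  unfold De
  rw [h]
  linarith

lemma De_le_one (k : ℕ) : De tat k ≤ 1 := tat.gap_le_one k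

lemma prevT_nonneg (k : ℕ) : 0 ≤ tat.prevT (k+1) := by
  rw [prevT_eq]; exact T_nonneg tat _

lemma exists_idx (s : ℝ) (hs : 0 ≤ s) :
    ∃ κ, tat.T κ ≤ s ∧ s < tat.T (κ+1) ∧ tat.traj s = tat.P κ := by
  classical
  have hex : ∃ k, s < tat.T k := tat.T_unbounded s
  have hK : s < tat.T (Nat.find hex) := Nat.find_spec hex
  have hK0 : Nat.find hex ≠ 0 := by
    intro h
    rw [h, tat.T_zero] at hK
    exact absurd hK (not_lt.2 hs)
  obtain ⟨κ, hκ⟩ := Nat.exists_eq_succ_of_ne_zero hK0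
  have hle : tat.T κ ≤ s := by
    have := Nat.find_min hex (m := κ) (by omega)
    exact not_lt.1 this
  rw [hκ] at hK
  exact ⟨κ, hle, hK, tat.traj_eq κ s hle hK⟩

lemma sample_idx (k : ℕ) (s : ℝ) (h1 : tat.prevT (k+1) < s) (h2 : s < tat.T (k+1)) :
    ∃ κ, Lk tat k ≤ κ ∧ κ ≤ k ∧ tat.traj s = tat.P κ := by
  have hs0 : 0 ≤ s := le_of_lt (lt_of_le_of_lt (prevT_nonneg tat k) h1)
  obtain ⟨κ, ha, hb, hc⟩ := exists_idx tat s hs0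
  refine ⟨κ, ?_, ?_, hc⟩
  · have h3 : tat.T (Lk tat k) < tat.T (κ+1) := by
      rw [← prevT_eq]
      exact lt_trans h1 hb
    have := tat.T_mono.lt_iff_lt.1 h3
    omega
  · have h3 : tat.T κ < tat.T (k+1) := lt_of_le_of_lt ha h2
    have := tat.T_mono.lt_iff_lt.1 h3
    omega

lemma P_const_good (k : ℕ) {κ r : ℕ} (h1 : Lk tat k ≤ κ) (h2 : κ ≤ r) (h3 : r ≤ k) :
    tat.P r (Jg tat k) = tat.P κ (Jg tat k) := by
  induction r, h2 using Nat.le_induction with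
  | base => rfl
  | succ r hr ih =>
    rw [tat.update_other r (Jg tat k) ?_, ih (by omega)]
    exact (Lk_max tat k (r+1) (by omega) h3).symm

lemma gap_sum (j' : Fin n) : ∀ k A B : ℕ,
    B ∈ (Finset.Ico A k).filter (fun k' => Jg tat k' = j') →
    (∀ x ∈ (Finset.Ico A k).filter (fun k' => Jg tat k' = j'), x ≤ B) →
    ∑ k' ∈ (Finset.Ico A k).filter (fun k' => Jg tat k' = j'), De tat k'
      ≤ 1 + tat.T (B+1) - tat.T (A+1) := by
  intro k
  induction k with
  | zero => intro A B hB _; simp at hB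
  | succ k ih =>
    intro A B hBmem hBub
    by_cases hA : A ≤ k
    swap
    · exfalso
      have : Finset.Ico A (k+1) = ∅ := by
        apply Finset.Ico_eq_empty
        omega
      rw [this] at hBmem
      simp at hBmem
    by_cases hg : Jg tat k = j'
    · have hsplit : (Finset.Ico A (k+1)).filter (fun k' => Jg tat k' = j')
          = insert k ((Finset.Ico A k).filter (fun k' => Jg tat k' = j')) := by
        rw [Nat.Ico_succ_right_eq_insert_Ico hA, Finset.filter_insert, if_pos hg]
      have hknotmem : k ∉ (Finset.Ico A k).filter (fun k' => Jg tat k' = j') := by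
        simp
      have hBk : B = k := by
        have h1 : B ≤ k := by
          have := (Finset.mem_filter.1 hBmem).1
          rw [Finset.mem_Ico] at this
          omega
        have h2 : k ≤ B := by
          apply hBub
          rw [hsplit]
          exact Finset.mem_insert_self _ _
        omega
      subst hBk
      rw [hsplit, Finset.sum_insert hknotmem]
      by_cases hFk : ((Finset.Ico A B).filter (fun k' => Jg tat k' = j')).Nonempty
      · set F := (Finset.Ico A B).filter (fun k' => Jg tat k' = j') with hF
        have hbmem := F.max'_mem hFk
        set b := F.max' hFk with hb
        have hbIco : A ≤ b ∧ b < B ∧ Jg tat b = j' := by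
          have h1 := Finset.mem_filter.1 hbmem
          have h2 := Finset.mem_Ico.1 h1.1
          exact ⟨h2.1, h2.2, h1.2⟩
        have hLk : Lk tat B = b + 1 := by
          have hub : Lk tat B ≤ b + 1 := by
            by_contra hcon
            push_neg at hcon
            have h1L : 1 ≤ Lk tat B := by omega
            have hgL : tat.g (Lk tat B) = tat.g (B+1) := Lk_good tat B h1L
            have hmem : (Lk tat B - 1) ∈ F := by
              rw [hF, Finset.mem_filter, Finset.mem_Ico]
              have hLkk := Lk_le tat B
              refine ⟨⟨by omega, by omega⟩, ?_⟩
              show tat.g (Lk tat B - 1 + 1) = j'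
              rw [show Lk tat B - 1 + 1 = Lk tat B by omega, hgL]
              exact hg
            have := Finset.le_max' F _ hmem
            omega
          have hlb : b + 1 ≤ Lk tat B := by
            by_contra hcon
            push_neg at hcon
            exact (Lk_max tat B (b+1) (by omega) (by omega))
              (show tat.g (b+1) = tat.g (B+1) from hbIco.2.2.trans hg.symm)
          omega
        have hsum := ih A b hbmem (fun x hx => Finset.le_max' F x hx)
        rw [← hF] at hsum
        have hDek : De tat B = tat.T (B+1) - tat.T (b+1) := by
          unfold De
          rw [prevT_eq tat B, hLk]
        rw [hDek]
        linarith
      · rw [Finset.not_nonempty_iff_eq_empty] at hFk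
        rw [hFk, Finset.sum_empty]
        have h1 : De tat B ≤ 1 := De_le_one tat B
        have h2 : tat.T (A+1) ≤ tat.T (B+1) := tat.T_mono.monotone (by omega)
        linarith
    · have hsplit : (Finset.Ico A (k+1)).filter (fun k' => Jg tat k' = j')
          = (Finset.Ico A k).filter (fun k' => Jg tat k' = j') := by
        rw [Nat.Ico_succ_right_eq_insert_Ico hA, Finset.filter_insert, if_neg hg]
      rw [hsplit] at hBmem hBub ⊢
      exact ih A B hBmem hBub

/-- total elapsed-time of same-good steps in a short range is at most 2. -/
lemma gap_sum_two (j' : Fin n) (k A : ℕ)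
    (h : tat.T k ≤ tat.T (A+1) + 1) :
    ∑ k' ∈ (Finset.Ico A k).filter (fun k' => Jg tat k' = j'), De tat k' ≤ 2 := by
  by_cases hne : ((Finset.Ico A k).filter (fun k' => Jg tat k' = j')).Nonempty
  · set F := (Finset.Ico A k).filter (fun k' => Jg tat k' = j') with hF
    have hgs := gap_sum tat j' k A (F.max' hne) (F.max'_mem hne)
      (fun x hx => Finset.le_max' F x hx)
    have hmaxlt : F.max' hne < k := by
      have := Finset.mem_Ico.1 (Finset.mem_filter.1 (F.max'_mem hne)).1
      omega
    have : tat.T (F.max' hne + 1) ≤ tat.T k := tat.T_mono.monotone (by omega)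
    rw [← hF] at hgs
    linarith
  · rw [Finset.not_nonempty_iff_eq_empty] at hne
    rw [hne]
    norm_num

end Tat

section Bounds

variable {n m : ℕ} {M : LeontiefMarket n m} {lam : ℝ} {p0 : Fin n → ℝ}
variable (tat : Tatonnement n (lexcess M) lam p0)

/-- total budget. -/
noncomputable def Etot (M : LeontiefMarket n m) : ℝ := ∑ i, M.e i

/-- uniform price bound along the tatonnement. -/
noncomputable def Bp (M : LeontiefMarket n m) (lam : ℝ) (p0 : Fin n → ℝ) : ℝ :=
  (1 + lam) * (Etot M + ∑ j, p0 j)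

variable (hm : 1 ≤ m) (hlam0 : 0 < lam) (hlam : lam ≤ 2/51) (hp0 : ∀ j, 0 < p0 j)

include hm hlam0 hlam hp0

lemma Etot_pos : 0 < Etot M := by
  have : Nonempty (Fin m) := Fin.pos_iff_nonempty.1 (by omega)
  exact Finset.sum_pos (fun i _ => M.e_pos i) Finset.univ_nonempty

lemma sum_p0_nonneg : (0:ℝ) ≤ ∑ j, p0 j :=
  Finset.sum_nonneg (fun j _ => (hp0 j).le)

set_option maxHeartbeats 1000000 in
lemma P_pos_le : ∀ k, (∀ j, 0 < tat.P k j) ∧ ∀ j, tat.P k j ≤ Bp M lam p0 := by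
  have hE : 0 < Etot M := Etot_pos (M := M) hm hlam0 hlam hp0
  have hs0 : (0:ℝ) ≤ ∑ j, p0 j := sum_p0_nonneg hm hlam0 hlam hp0
  intro k
  induction k using Nat.strong_induction_on with
  | _ k ih =>
    match k with
    | 0 =>
      constructor
      · intro j; rw [tat.P_zero]; exact hp0 j
      · intro j
        rw [tat.P_zero]
        have h1 : p0 j ≤ ∑ j', p0 j' :=
          Finset.single_le_sum (fun j' _ => (hp0 j').le) (Finset.mem_univ j)
        have h2 : (Etot M + ∑ j', p0 j') ≤ Bp M lam p0 := by
          unfold Bp; nlinarith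
        unfold Bp; nlinarith
    | Nat.succ k =>
      have ihk := ih k (by omega)
      obtain ⟨⟨s₁, hs11, hs12, hs13⟩, ⟨s₂, hs21, hs22, hs23⟩, hupd⟩ := zt_spec tat k
      obtain ⟨κ₁, hκ11, hκ12, hκ13⟩ := sample_idx tat k s₁ hs11 hs12
      have hpos1 : ∀ j, 0 < tat.P κ₁ j := (ih κ₁ (by omega)).1
      have hmtub : mt tat k ≤ 1 := min_le_right _ _
      have hzlb : -1 ≤ zt tat k := by
        have h1 : lexcess M (tat.traj s₁) (Jg tat k) ≤ zt tat k := hs13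
        rw [hκ13, lexcess_eq_A] at h1
        have := A_nonneg M hpos1 (Jg tat k)
        linarith
      have hmtlb : -1 ≤ mt tat k := le_min hzlb (by norm_num)
      have hDe0 := De_pos tat k
      have hDe1 := De_le_one tat k
      have hmd1 : -1 ≤ mt tat k * De tat k := by
        nlinarith [mul_nonneg (by linarith : (0:ℝ) ≤ 1 + mt tat k) hDe0.le]
      have hmd2 : mt tat k * De tat k ≤ 1 := by
        nlinarith [mul_nonneg (by linarith : (0:ℝ) ≤ 1 - mt tat k) hDe0.le]
      have hfac_lb : 1 - lam ≤ 1 + lam * mt tat k * De tat k := by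
        nlinarith [mul_le_mul_of_nonneg_left hmd1 hlam0.le]
      have hfac_ub : 1 + lam * mt tat k * De tat k ≤ 1 + lam := by
        nlinarith [mul_le_mul_of_nonneg_left hmd2 hlam0.le]
      have hfac_pos : 0 < 1 + lam * mt tat k * De tat k := by nlinarith
      have hPkpos : 0 < tat.P k (Jg tat k) := ihk.1 _
      constructor
      · intro j
        by_cases hj : j = tat.g (k+1)
        · rw [hj]
          rw [show tat.P (k+1) (tat.g (k+1)) = tat.P (k+1) (Jg tat k) from rfl, hupd]
          exact mul_pos hPkpos hfac_pos
        · rw [tat.update_other k j hj]; exact ihk.1 j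
      · intro j
        by_cases hj : j = tat.g (k+1)
        · rw [hj]
          rw [show tat.P (k+1) (tat.g (k+1)) = tat.P (k+1) (Jg tat k) from rfl, hupd]
          by_cases hcase : tat.P k (Jg tat k) ≤ Etot M + ∑ j', p0 j'
          · calc tat.P k (Jg tat k) * (1 + lam * mt tat k * De tat k)
                ≤ tat.P k (Jg tat k) * (1 + lam) :=
                  mul_le_mul_of_nonneg_left hfac_ub hPkpos.le
            _ ≤ (Etot M + ∑ j', p0 j') * (1 + lam) := by nlinarith
            _ = Bp M lam p0 := by unfold Bp; ring
          · push_neg at hcase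
            obtain ⟨κ₂, hκ21, hκ22, hκ23⟩ := sample_idx tat k s₂ hs21 hs22
            have hpos2 : ∀ j', 0 < tat.P κ₂ j' := (ih κ₂ (by omega)).1
            have hzt_ub : zt tat k ≤ Etot M / tat.P k (Jg tat k) - 1 := by
              have h2 : zt tat k ≤ lexcess M (tat.P κ₂) (Jg tat k) := by
                rw [← hκ23]; exact hs23
              rw [lexcess_eq_A] at h2
              have hle := A_le M hpos2 (Jg tat k)
              have hconst : tat.P k (Jg tat k) = tat.P κ₂ (Jg tat k) :=
                P_const_good tat k hκ21 hκ22 (le_refl k)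
              rw [← hconst] at hle
              unfold Etot
              linarith
            have hmt_neg : mt tat k ≤ 0 := by
              have hdiv : Etot M / tat.P k (Jg tat k) < 1 := by
                rw [div_lt_one hPkpos]
                linarith
              have : zt tat k < 0 := by linarith
              exact le_trans (min_le_left _ _) this.le
            have hfac1 : 1 + lam * mt tat k * De tat k ≤ 1 := by
              nlinarith [mul_nonneg (mul_nonneg hlam0.le (neg_nonneg.2 hmt_neg)) hDe0.le]
            calc tat.P k (Jg tat k) * (1 + lam * mt tat k * De tat k)
                ≤ tat.P k (Jg tat k) * 1 := mul_le_mul_of_nonneg_left hfac1 hPkpos.le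
            _ = tat.P k (Jg tat k) := mul_one _
            _ ≤ Bp M lam p0 := ihk.2 _
        · rw [tat.update_other k j hj]; exact ihk.2 j

lemma P_pos (k : ℕ) (j : Fin n) : 0 < tat.P k j :=
  (P_pos_le tat hm hlam0 hlam hp0 k).1 j

lemma P_le (k : ℕ) (j : Fin n) : tat.P k j ≤ Bp M lam p0 :=
  (P_pos_le tat hm hlam0 hlam hp0 k).2 j

lemma mt_bounds (k : ℕ) : -1 ≤ mt tat k ∧ mt tat k ≤ 1 := by
  obtain ⟨⟨s₁, hs11, hs12, hs13⟩, _, _⟩ := zt_spec tat k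
  obtain ⟨κ₁, hκ11, hκ12, hκ13⟩ := sample_idx tat k s₁ hs11 hs12
  have hpos1 : ∀ j, 0 < tat.P κ₁ j := P_pos tat hm hlam0 hlam hp0 κ₁
  have hzlb : -1 ≤ zt tat k := by
    rw [hκ13, lexcess_eq_A] at hs13
    have := A_nonneg M hpos1 (Jg tat k)
    linarith
  exact ⟨le_min hzlb (by norm_num), min_le_right _ _⟩

lemma abs_mt_le_one (k : ℕ) : |mt tat k| ≤ 1 :=
  abs_le.2 ⟨(mt_bounds tat hm hlam0 hlam hp0 k).1, (mt_bounds tat hm hlam0 hlam hp0 k).2⟩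

omit hm hlam0 hlam hp0 in
lemma P_step (k : ℕ) :
    tat.P (k+1) (Jg tat k) = tat.P k (Jg tat k) * (1 + lam * mt tat k * De tat k) :=
  (zt_spec tat k).2.2

end Bounds

section Move

variable {n m : ℕ} {M : LeontiefMarket n m} {lam : ℝ} {p0 : Fin n → ℝ}
variable (tat : Tatonnement n (lexcess M) lam p0)

/-- cumulative relative movement of good `j'` during steps in `[κ, k)`. -/
noncomputable def Xv (κ k : ℕ) (j' : Fin n) : ℝ :=
  ∑ k' ∈ (Finset.Ico κ k).filter (fun k' => Jg tat k' = j'), lam * |mt tat k'| * De tat k'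

variable (hm : 1 ≤ m) (hlam0 : 0 < lam) (hlam : lam ≤ 2/51) (hp0 : ∀ j, 0 < p0 j)

include hm hlam0 hlam hp0

lemma Xv_nonneg (κ k : ℕ) (j' : Fin n) : 0 ≤ Xv tat κ k j' := by
  apply Finset.sum_nonneg
  intro k' _
  have := De_pos tat k'
  have := abs_nonneg (mt tat k')
  positivity

lemma Xv_mono_left {κ k : ℕ} (h : Lk tat k ≤ κ) (j' : Fin n) :
    Xv tat κ k j' ≤ Xv tat (Lk tat k) k j' := by
  apply Finset.sum_le_sum_of_subset_of_nonneg
  · apply Finset.filter_subset_filter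
    apply Finset.Ico_subset_Ico h (le_refl k)
  · intro k' _ _
    have := De_pos tat k'
    have := abs_nonneg (mt tat k')
    positivity

lemma Xv_mono_right {κ r k : ℕ} (h : r ≤ k) (j' : Fin n) :
    Xv tat κ r j' ≤ Xv tat κ k j' := by
  apply Finset.sum_le_sum_of_subset_of_nonneg
  · apply Finset.filter_subset_filter
    apply Finset.Ico_subset_Ico (le_refl κ) h
  · intro k' _ _
    have := De_pos tat k'
    have := abs_nonneg (mt tat k')
    positivity

lemma Xv_le_2lam (k : ℕ) (j' : Fin n) : Xv tat (Lk tat k) k j' ≤ 2 * lam := by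
  have h1 : Xv tat (Lk tat k) k j'
      ≤ ∑ k' ∈ (Finset.Ico (Lk tat k) k).filter (fun k' => Jg tat k' = j'),
          lam * De tat k' := by
    apply Finset.sum_le_sum
    intro k' _
    have h2 : |mt tat k'| ≤ 1 := abs_mt_le_one tat hm hlam0 hlam hp0 k'
    have h3 := (De_pos tat k').le
    nlinarith [mul_nonneg (mul_nonneg hlam0.le
      (by linarith [abs_nonneg (mt tat k')] : (0:ℝ) ≤ 1 - |mt tat k'|)) h3]
  have h4 : tat.T k ≤ tat.T (Lk tat k + 1) + 1 := by
    have h5 : tat.T k ≤ tat.T (k+1) := (tat.T_mono.monotone (by omega))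
    have h6 : tat.T (k+1) = tat.T (Lk tat k) + De tat k := by
      unfold De
      rw [prevT_eq tat k]
      ring
    have h7 : tat.T (Lk tat k) ≤ tat.T (Lk tat k + 1) := tat.T_mono.monotone (by omega)
    have h8 := De_le_one tat k
    linarith
  have h9 := gap_sum_two tat j' k (Lk tat k) h4
  rw [← Finset.mul_sum] at h1
  nlinarith

lemma BND_aux (κ : ℕ) (j' : Fin n) : ∀ r, κ ≤ r → Xv tat κ r j' ≤ 1/2 →
    (1 - Xv tat κ r j') * tat.P κ j' ≤ tat.P r j' ∧
    tat.P r j' * (1 - Xv tat κ r j') ≤ tat.P κ j' := by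
  intro r hr
  induction r, hr using Nat.le_induction with
  | base =>
    intro _
    have h0 : Xv tat κ κ j' = 0 := by
      unfold Xv
      rw [Finset.Ico_self, Finset.filter_empty, Finset.sum_empty]
    rw [h0]
    norm_num
  | succ r hκr ih =>
    intro hX1
    have hXnonneg := Xv_nonneg tat hm hlam0 hlam hp0 κ r j'
    have hPκ := P_pos tat hm hlam0 hlam hp0 κ j'
    have hPr := P_pos tat hm hlam0 hlam hp0 r j'
    have hPr1 := P_pos tat hm hlam0 hlam hp0 (r+1) j'
    by_cases hg : Jg tat r = j'
    · have hsplit : Xv tat κ (r+1) j' = Xv tat κ r j' + lam * |mt tat r| * De tat r := by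
        unfold Xv
        rw [Nat.Ico_succ_right_eq_insert_Ico hκr, Finset.filter_insert, if_pos hg,
          Finset.sum_insert (by simp)]
        ring
      set x := lam * |mt tat r| * De tat r with hx
      have hx0 : 0 ≤ x := by
        have := (De_pos tat r).le
        have := abs_nonneg (mt tat r)
        positivity
      have hXr : Xv tat κ r j' ≤ 1/2 := by
        rw [hsplit] at hX1
        linarith
      obtain ⟨ih1, ih2⟩ := ih hXr
      have hupd : tat.P (r+1) j' = tat.P r j' * (1 + lam * mt tat r * De tat r) := by
        rw [← hg]
        exact P_step tat r
      have hdel : -x ≤ lam * mt tat r * De tat r ∧ lam * mt tat r * De tat r ≤ x := by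
        have hld : (0:ℝ) ≤ lam * De tat r := mul_nonneg hlam0.le (De_pos tat r).le
        constructor
        · rw [hx]
          nlinarith [mul_le_mul_of_nonneg_left (neg_abs_le (mt tat r)) hld]
        · rw [hx]
          nlinarith [mul_le_mul_of_nonneg_left (le_abs_self (mt tat r)) hld]
      rw [hsplit, hupd]
      have hX1' : Xv tat κ r j' + x ≤ 1/2 := by rw [hsplit] at hX1; linarith
      constructor
      · -- (1 - (X + x)) * Pκ ≤ Pr * (1 + δ)
        have s1 : tat.P r j' * (1 - x) ≤ tat.P r j' * (1 + lam * mt tat r * De tat r) := by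
          apply mul_le_mul_of_nonneg_left _ hPr.le
          linarith [hdel.1]
        have s2 : (1 - Xv tat κ r j') * (1 - x) * tat.P κ j' ≤ tat.P r j' * (1 - x) := by
          have h1x : 0 ≤ 1 - x := by linarith
          calc (1 - Xv tat κ r j') * (1 - x) * tat.P κ j'
              = ((1 - Xv tat κ r j') * tat.P κ j') * (1 - x) := by ring
          _ ≤ tat.P r j' * (1 - x) := mul_le_mul_of_nonneg_right ih1 h1x
        have s3 : (1 - (Xv tat κ r j' + x)) * tat.P κ j'
            ≤ (1 - Xv tat κ r j') * (1 - x) * tat.P κ j' := by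
          apply mul_le_mul_of_nonneg_right _ hPκ.le
          nlinarith
        linarith
      · -- Pr * (1 + δ) * (1 - (X + x)) ≤ Pκ
        have h1Xx : 0 ≤ 1 - (Xv tat κ r j' + x) := by linarith
        have s1 : tat.P r j' * (1 + lam * mt tat r * De tat r) * (1 - (Xv tat κ r j' + x))
            ≤ tat.P r j' * (1 + x) * (1 - (Xv tat κ r j' + x)) := by
          apply mul_le_mul_of_nonneg_right _ h1Xx
          apply mul_le_mul_of_nonneg_left _ hPr.le
          linarith [hdel.2]
        have s2 : tat.P r j' * ((1 + x) * (1 - (Xv tat κ r j' + x)))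
            ≤ tat.P r j' * (1 - Xv tat κ r j') := by
          apply mul_le_mul_of_nonneg_left _ hPr.le
          nlinarith
        calc tat.P r j' * (1 + lam * mt tat r * De tat r) * (1 - (Xv tat κ r j' + x))
            ≤ tat.P r j' * (1 + x) * (1 - (Xv tat κ r j' + x)) := s1
        _ = tat.P r j' * ((1 + x) * (1 - (Xv tat κ r j' + x))) := by ring
        _ ≤ tat.P r j' * (1 - Xv tat κ r j') := s2
        _ ≤ tat.P κ j' := ih2
    · have hsplit : Xv tat κ (r+1) j' = Xv tat κ r j' := by
        unfold Xv
        rw [Nat.Ico_succ_right_eq_insert_Ico hκr, Finset.filter_insert, if_neg hg]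
      have hupd : tat.P (r+1) j' = tat.P r j' := by
        apply tat.update_other r j'
        intro hcon
        exact hg (by rw [Jg]; exact hcon.symm)
      rw [hsplit, hupd]
      exact ih (by rw [hsplit] at hX1; exact hX1)

lemma rho_pos : (0:ℝ) < 1 - 2*lam := by linarith

lemma BND {κ k : ℕ} (h1 : Lk tat k ≤ κ) (h2 : κ ≤ k) (j' : Fin n) :
    (1 - Xv tat κ k j') * tat.P κ j' ≤ tat.P k j' ∧
    tat.P k j' * (1 - Xv tat κ k j') ≤ tat.P κ j' := by
  apply BND_aux tat hm hlam0 hlam hp0 κ j' k h2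
  have := Xv_mono_left tat hm hlam0 hlam hp0 h1 j'
  have := Xv_le_2lam tat hm hlam0 hlam hp0 k j'
  linarith

lemma price_lb {κ k : ℕ} (h1 : Lk tat k ≤ κ) (h2 : κ ≤ k) (j' : Fin n) :
    (1 - 2*lam) * tat.P κ j' ≤ tat.P k j' := by
  have hB := (BND tat hm hlam0 hlam hp0 h1 h2 j').1
  have hX2 : Xv tat κ k j' ≤ 2*lam := le_trans (Xv_mono_left tat hm hlam0 hlam hp0 h1 j')
    (Xv_le_2lam tat hm hlam0 hlam hp0 k j')
  have hPκ := P_pos tat hm hlam0 hlam hp0 κ j'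
  nlinarith

lemma price_lb' {κ k : ℕ} (h1 : Lk tat k ≤ κ) (h2 : κ ≤ k) (j' : Fin n) :
    (1 - 2*lam) * tat.P k j' ≤ tat.P κ j' := by
  have hB := (BND tat hm hlam0 hlam hp0 h1 h2 j').2
  have hX2 : Xv tat κ k j' ≤ 2*lam := le_trans (Xv_mono_left tat hm hlam0 hlam hp0 h1 j')
    (Xv_le_2lam tat hm hlam0 hlam hp0 k j')
  have hPk := P_pos tat hm hlam0 hlam hp0 k j'
  nlinarith

lemma movement {κ k : ℕ} (h1 : Lk tat k ≤ κ) (h2 : κ ≤ k) (j' : Fin n) :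
    |tat.P k j' - tat.P κ j'| * (1 - 2*lam) ≤ tat.P k j' * Xv tat (Lk tat k) k j' := by
  obtain ⟨hB1, hB2⟩ := BND tat hm hlam0 hlam hp0 h1 h2 j'
  have hX0 := Xv_nonneg tat hm hlam0 hlam hp0 κ k j'
  have hX2 : Xv tat κ k j' ≤ 2*lam := le_trans (Xv_mono_left tat hm hlam0 hlam hp0 h1 j')
    (Xv_le_2lam tat hm hlam0 hlam hp0 k j')
  have hXm : Xv tat κ k j' ≤ Xv tat (Lk tat k) k j' := Xv_mono_left tat hm hlam0 hlam hp0 h1 j'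
  have hPκ := P_pos tat hm hlam0 hlam hp0 κ j'
  have hPk := P_pos tat hm hlam0 hlam hp0 k j'
  have hX0' := Xv_nonneg tat hm hlam0 hlam hp0 (Lk tat k) k j'
  have hlb := price_lb tat hm hlam0 hlam hp0 h1 h2 j'
  have hXL2 : Xv tat (Lk tat k) k j' ≤ 2*lam := Xv_le_2lam tat hm hlam0 hlam hp0 k j'
  have hup1 : (tat.P k j' - tat.P κ j') * (1 - 2*lam) ≤ tat.P k j' * Xv tat (Lk tat k) k j' := by
    have e1 : tat.P k j' - tat.P κ j' ≤ tat.P k j' * Xv tat κ k j' := by nlinarith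
    have e2 : tat.P k j' * Xv tat κ k j' ≤ tat.P k j' * Xv tat (Lk tat k) k j' :=
      mul_le_mul_of_nonneg_left hXm hPk.le
    nlinarith [mul_nonneg hPk.le hX0]
  have hup2 : (tat.P κ j' - tat.P k j') * (1 - 2*lam) ≤ tat.P k j' * Xv tat (Lk tat k) k j' := by
    have e1 : tat.P κ j' - tat.P k j' ≤ tat.P κ j' * Xv tat κ k j' := by nlinarith
    have e2 : (tat.P κ j' * Xv tat κ k j') * (1 - 2*lam)
        ≤ tat.P k j' * Xv tat (Lk tat k) k j' := by
      have e3 : ((1 - 2*lam) * tat.P κ j') * Xv tat κ k j' ≤ tat.P k j' * Xv tat κ k j' :=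
        mul_le_mul_of_nonneg_right hlb hX0
      have e4 : tat.P k j' * Xv tat κ k j' ≤ tat.P k j' * Xv tat (Lk tat k) k j' :=
        mul_le_mul_of_nonneg_left hXm hPk.le
      nlinarith
    nlinarith [mul_nonneg hPκ.le hX0, mul_nonneg hPk.le hX0']
  rcases abs_cases (tat.P k j' - tat.P κ j') with ⟨heq, _⟩ | ⟨heq, _⟩
  · rw [heq]; exact hup1
  · rw [heq]
    calc -(tat.P k j' - tat.P κ j') * (1 - 2*lam)
        = (tat.P κ j' - tat.P k j') * (1 - 2*lam) := by ring
    _ ≤ tat.P k j' * Xv tat (Lk tat k) k j' := hup2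

end Move

section Phi

variable {n m : ℕ} (M : LeontiefMarket n m) {lam : ℝ}
variable (hlam0 : 0 < lam) (hlam : lam ≤ 2/51)

include hlam0 hlam

lemma log_lb {x : ℝ} (hx : |x| ≤ lam) : x - x^2/(1-lam) ≤ Real.log (1+x) := by
  have hxl : -lam ≤ x := neg_le_of_abs_le hx
  have hxu : x ≤ lam := le_of_abs_le hx
  have h1x : 0 < 1 + x := by nlinarith
  have h1x' : (1:ℝ) + x ≠ 0 := h1x.ne'
  have hl' : (1:ℝ) - lam ≠ 0 := by intro h; nlinarith
  have hlog := Real.log_le_sub_one_of_pos (inv_pos.2 h1x)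
  rw [Real.log_inv] at hlog
  have heq : 1 - (1+x)⁻¹ - (x - x^2/(1-lam)) = (x^2*(lam + x))/((1+x)*(1-lam)) := by
    field_simp
    ring
  have hpos : 0 ≤ (x^2*(lam + x))/((1+x)*(1-lam)) := by
    apply div_nonneg
    · nlinarith [sq_nonneg x]
    · nlinarith
  linarith

omit hlam0 hlam in
lemma S_update (p : Fin n → ℝ) (j : Fin n) (v : ℝ) (i : Fin m) :
    S M (Function.update p j v) i = S M p i + M.c i j * (v - p j) := by
  unfold S
  have hfun : (fun k => M.c i k * (Function.update p j v) k)
      = Function.update (fun k => M.c i k * p k) j (M.c i j * v) := by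
    funext k
    by_cases hk : k = j
    · subst hk; simp
    · simp [Function.update, hk]
  rw [hfun, Finset.sum_update_of_mem (Finset.mem_univ j),
    Finset.sdiff_singleton_eq_erase,
    ← Finset.sum_erase_add Finset.univ _ (Finset.mem_univ j)]
  ring

omit hlam0 hlam in
lemma sum_update (p : Fin n → ℝ) (j : Fin n) (v : ℝ) :
    ∑ j', (Function.update p j v) j' = (∑ j', p j') + (v - p j) := by
  rw [Finset.sum_update_of_mem (Finset.mem_univ j),
    Finset.sdiff_singleton_eq_erase,
    ← Finset.sum_erase_add Finset.univ _ (Finset.mem_univ j)]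
  ring

lemma phi_step (p : Fin n → ℝ) (hp : ∀ j, 0 < p j) (j : Fin n) (δ : ℝ) (hδ : |δ| ≤ lam) :
    phi M (Function.update p j (p j * (1 + δ))) - phi M p
      ≤ p j * δ * (1 - A M p j) + δ^2 * (p j * A M p j) / (1 - lam) := by
  have hδl : -lam ≤ δ := neg_le_of_abs_le hδ
  have hδu : δ ≤ lam := le_of_abs_le hδ
  set v := p j * (1 + δ) with hv
  have hSpos : ∀ i, 0 < S M p i := S_pos M hp
  have hθmem : ∀ i : Fin m, 0 ≤ M.c i j * p j / S M p i ∧ M.c i j * p j / S M p i ≤ 1 := by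
    intro i
    constructor
    · apply div_nonneg (mul_nonneg (M.c_nonneg i j) (hp j).le) (hSpos i).le
    · rw [div_le_one (hSpos i)]
      apply Finset.single_le_sum (f := fun k => M.c i k * p k) _ (Finset.mem_univ j)
      intro k _
      exact mul_nonneg (M.c_nonneg i k) (hp k).le
  have habs : ∀ i : Fin m, |(M.c i j * p j / S M p i) * δ| ≤ lam := by
    intro i
    rw [abs_mul]
    have h := hθmem i
    have h1 : |M.c i j * p j / S M p i| ≤ 1 := by
      rw [abs_of_nonneg h.1]
      exact h.2
    have h2 := mul_le_mul_of_nonneg_right h1 (abs_nonneg δ)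
    rw [one_mul] at h2
    exact le_trans h2 hδ
  have hfacpos : ∀ i : Fin m, (0:ℝ) < 1 + (M.c i j * p j / S M p i) * δ := by
    intro i
    have := neg_le_of_abs_le (habs i)
    nlinarith
  have hSup : ∀ i, S M (Function.update p j v) i
      = S M p i * (1 + (M.c i j * p j / S M p i) * δ) := by
    intro i
    rw [S_update]
    have hne := (hSpos i).ne'
    field_simp
    ring
  have hlogS : ∀ i : Fin m, Real.log (S M (Function.update p j v) i)
      = Real.log (S M p i) + Real.log (1 + (M.c i j * p j / S M p i) * δ) := by
    intro i
    rw [hSup i, Real.log_mul (hSpos i).ne' (hfacpos i).ne']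
  have hloglb : ∀ i : Fin m,
      (M.c i j * p j / S M p i) * δ - ((M.c i j * p j / S M p i) * δ)^2/(1-lam)
        ≤ Real.log (1 + (M.c i j * p j / S M p i) * δ) :=
    fun i => log_lb hlam0 hlam (habs i)
  have hsumθ : ∑ i, M.e i * (M.c i j * p j / S M p i) = p j * A M p j := by
    unfold A
    rw [Finset.mul_sum]
    apply Finset.sum_congr rfl
    intro i _
    have hne := (hSpos i).ne'
    field_simp
  have hsumθsq : ∑ i, M.e i * (M.c i j * p j / S M p i)^2
      ≤ ∑ i, M.e i * (M.c i j * p j / S M p i) := by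
    apply Finset.sum_le_sum
    intro i _
    have h := hθmem i
    have h3 : (M.c i j * p j / S M p i) ^ 2 ≤ M.c i j * p j / S M p i := by nlinarith
    exact mul_le_mul_of_nonneg_left h3 (M.e_pos i).le
  unfold phi
  rw [sum_update]
  have hlogsum : ∑ i, M.e i * Real.log (S M (Function.update p j v) i)
      = (∑ i, M.e i * Real.log (S M p i))
        + ∑ i, M.e i * Real.log (1 + (M.c i j * p j / S M p i) * δ) := by
    rw [← Finset.sum_add_distrib]
    apply Finset.sum_congr rfl
    intro i _
    rw [hlogS i]
    ring
  rw [hlogsum]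
  have h1lam : (0:ℝ) < 1 - lam := by nlinarith
  have hlb : ∑ i, M.e i * ((M.c i j * p j / S M p i) * δ
        - ((M.c i j * p j / S M p i) * δ)^2/(1-lam))
      ≤ ∑ i, M.e i * Real.log (1 + (M.c i j * p j / S M p i) * δ) := by
    apply Finset.sum_le_sum
    intro i _
    exact mul_le_mul_of_nonneg_left (hloglb i) (M.e_pos i).le
  have hexp : ∑ i, M.e i * ((M.c i j * p j / S M p i) * δ
        - ((M.c i j * p j / S M p i) * δ)^2/(1-lam))
      = δ * (∑ i, M.e i * (M.c i j * p j / S M p i))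
        - δ^2/(1-lam) * ∑ i, M.e i * (M.c i j * p j / S M p i)^2 := by
    rw [Finset.mul_sum, Finset.mul_sum, ← Finset.sum_sub_distrib]
    apply Finset.sum_congr rfl
    intro i _
    field_simp
  have hA0 : 0 ≤ A M p j := A_nonneg M hp j
  have hsq : δ^2/(1-lam) * ∑ i, M.e i * (M.c i j * p j / S M p i)^2
      ≤ δ^2/(1-lam) * (p j * A M p j) := by
    apply mul_le_mul_of_nonneg_left _ (by positivity)
    rw [← hsumθ]
    exact hsumθsq
  have hv' : v - p j = p j * δ := by rw [hv]; ring
  rw [hv']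
  rw [hexp, hsumθ] at hlb
  have hre : δ^2 * (p j * A M p j) / (1-lam) = δ^2/(1-lam) * (p j * A M p j) := by ring
  rw [hre]
  nlinarith [hlb, hsq]

end Phi

section Diff

variable {n m : ℕ} {M : LeontiefMarket n m} {lam : ℝ} {p0 : Fin n → ℝ}
variable (tat : Tatonnement n (lexcess M) lam p0)
variable (hm : 1 ≤ m) (hlam0 : 0 < lam) (hlam : lam ≤ 2/51) (hp0 : ∀ j, 0 < p0 j)

include hm hlam0 hlam hp0

lemma S_lb {κ k : ℕ} (h1 : Lk tat k ≤ κ) (h2 : κ ≤ k) (i : Fin m) :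
    (1 - 2*lam) * S M (tat.P k) i ≤ S M (tat.P κ) i := by
  unfold S
  rw [Finset.mul_sum]
  apply Finset.sum_le_sum
  intro j' _
  have hpl := price_lb' tat hm hlam0 hlam hp0 h1 h2 j'
  have hc := M.c_nonneg i j'
  calc (1-2*lam) * (M.c i j' * tat.P k j') = M.c i j' * ((1-2*lam) * tat.P k j') := by ring
  _ ≤ M.c i j' * tat.P κ j' := mul_le_mul_of_nonneg_left hpl hc

lemma S_ub {κ k : ℕ} (h1 : Lk tat k ≤ κ) (h2 : κ ≤ k) (i : Fin m) :
    (1 - 2*lam) * S M (tat.P κ) i ≤ S M (tat.P k) i := by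
  unfold S
  rw [Finset.mul_sum]
  apply Finset.sum_le_sum
  intro j' _
  have hpl := price_lb tat hm hlam0 hlam hp0 h1 h2 j'
  have hc := M.c_nonneg i j'
  calc (1-2*lam) * (M.c i j' * tat.P κ j') = M.c i j' * ((1-2*lam) * tat.P κ j') := by ring
  _ ≤ M.c i j' * tat.P k j' := mul_le_mul_of_nonneg_left hpl hc

lemma A_diff {κ k : ℕ} (h1 : Lk tat k ≤ κ) (h2 : κ ≤ k) :
    |A M (tat.P κ) (Jg tat k) - A M (tat.P k) (Jg tat k)|
      * (tat.P k (Jg tat k) * (1-2*lam)^3)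
    ≤ ∑ j', Xv tat (Lk tat k) k j' * G M (tat.P k) (Jg tat k) j' := by
  set j := Jg tat k with hj
  have hpk : ∀ j', 0 < tat.P k j' := P_pos tat hm hlam0 hlam hp0 k
  have hpκ : ∀ j', 0 < tat.P κ j' := P_pos tat hm hlam0 hlam hp0 κ
  have hSk : ∀ i, 0 < S M (tat.P k) i := S_pos M hpk
  have hSκ : ∀ i, 0 < S M (tat.P κ) i := S_pos M hpκ
  have hρ : (0:ℝ) < 1 - 2*lam := by linarith
  have hXnn : ∀ j', 0 ≤ Xv tat (Lk tat k) k j' :=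
    fun j' => Xv_nonneg tat hm hlam0 hlam hp0 (Lk tat k) k j'
  have hD0 : ∀ i, 0 ≤ ∑ j', Xv tat (Lk tat k) k j' * (M.c i j' * tat.P k j') := by
    intro i
    apply Finset.sum_nonneg
    intro j' _
    exact mul_nonneg (hXnn j') (mul_nonneg (M.c_nonneg i j') (hpk j').le)
  have hDS : ∀ i, |S M (tat.P k) i - S M (tat.P κ) i| * (1-2*lam)
      ≤ ∑ j', Xv tat (Lk tat k) k j' * (M.c i j' * tat.P k j') := by
    intro i
    have e1 : S M (tat.P k) i - S M (tat.P κ) i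
        = ∑ j', M.c i j' * (tat.P k j' - tat.P κ j') := by
      unfold S
      rw [← Finset.sum_sub_distrib]
      apply Finset.sum_congr rfl
      intro j' _
      ring
    rw [e1]
    have e2 : |∑ j', M.c i j' * (tat.P k j' - tat.P κ j')|
        ≤ ∑ j', M.c i j' * |tat.P k j' - tat.P κ j'| := by
      refine le_trans (Finset.abs_sum_le_sum_abs _ _) ?_
      apply Finset.sum_le_sum
      intro j' _
      rw [abs_mul, abs_of_nonneg (M.c_nonneg i j')]
    have e3 : (∑ j', M.c i j' * |tat.P k j' - tat.P κ j'|) * (1-2*lam)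
        ≤ ∑ j', Xv tat (Lk tat k) k j' * (M.c i j' * tat.P k j') := by
      rw [Finset.sum_mul]
      apply Finset.sum_le_sum
      intro j' _
      have hmv := movement tat hm hlam0 hlam hp0 h1 h2 j'
      calc M.c i j' * |tat.P k j' - tat.P κ j'| * (1-2*lam)
          = M.c i j' * (|tat.P k j' - tat.P κ j'| * (1-2*lam)) := by ring
      _ ≤ M.c i j' * (tat.P k j' * Xv tat (Lk tat k) k j') :=
          mul_le_mul_of_nonneg_left hmv (M.c_nonneg i j')
      _ = Xv tat (Lk tat k) k j' * (M.c i j' * tat.P k j') := by ring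
    calc |∑ j', M.c i j' * (tat.P k j' - tat.P κ j')| * (1-2*lam)
        ≤ (∑ j', M.c i j' * |tat.P k j' - tat.P κ j'|) * (1-2*lam) :=
          mul_le_mul_of_nonneg_right e2 hρ.le
    _ ≤ _ := e3
  have hterm : ∀ i : Fin m,
      |M.e i * M.c i j / S M (tat.P κ) i - M.e i * M.c i j / S M (tat.P k) i|
        * (tat.P k j * (1-2*lam)^3)
      ≤ M.e i * M.c i j * tat.P k j
          * (∑ j', Xv tat (Lk tat k) k j' * (M.c i j' * tat.P k j'))
          / (S M (tat.P k) i)^2 := by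
    intro i
    have hec : 0 ≤ M.e i * M.c i j := mul_nonneg (M.e_pos i).le (M.c_nonneg i j)
    have ed : M.e i * M.c i j / S M (tat.P κ) i - M.e i * M.c i j / S M (tat.P k) i
        = (M.e i * M.c i j) * (S M (tat.P k) i - S M (tat.P κ) i)
          / (S M (tat.P κ) i * S M (tat.P k) i) := by
      rw [div_sub_div _ _ (hSκ i).ne' (hSk i).ne']
      ring_nf
    rw [ed, abs_div, abs_mul, abs_of_nonneg hec, abs_of_pos (mul_pos (hSκ i) (hSk i))]
    rw [div_mul_eq_mul_div, div_le_div_iff₀ (mul_pos (hSκ i) (hSk i)) (pow_pos (hSk i) 2)]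
    set DS := |S M (tat.P k) i - S M (tat.P κ) i| with hDSdef
    set Di := ∑ j', Xv tat (Lk tat k) k j' * (M.c i j' * tat.P k j') with hDidef
    have t1 : DS * (1-2*lam) ≤ Di := hDS i
    have t2 : (1-2*lam) * S M (tat.P k) i ≤ S M (tat.P κ) i := S_lb tat hm hlam0 hlam hp0 h1 h2 i
    have big : (DS * (1-2*lam)) * ((1-2*lam) * S M (tat.P k) i) ≤ Di * S M (tat.P κ) i := by
      apply mul_le_mul t1 t2 (mul_nonneg hρ.le (hSk i).le) (hD0 i)
    have hfac : 0 ≤ M.e i * M.c i j * tat.P k j * S M (tat.P k) i := by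
      have := (hpk j).le
      have := (hSk i).le
      positivity
    have step1 : (M.e i * M.c i j * tat.P k j * S M (tat.P k) i)
          * ((DS * (1-2*lam)) * ((1-2*lam) * S M (tat.P k) i))
        ≤ (M.e i * M.c i j * tat.P k j * S M (tat.P k) i) * (Di * S M (tat.P κ) i) :=
      mul_le_mul_of_nonneg_left big hfac
    have hX0 : 0 ≤ (M.e i * M.c i j * tat.P k j * S M (tat.P k) i)
          * ((DS * (1-2*lam)) * ((1-2*lam) * S M (tat.P k) i)) := by
      apply mul_nonneg hfac
      apply mul_nonneg (mul_nonneg (abs_nonneg _) hρ.le) (mul_nonneg hρ.le (hSk i).le)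
    nlinarith [step1, hX0, mul_nonneg (by linarith : (0:ℝ) ≤ 2*lam) hX0]
  have hsum : |A M (tat.P κ) j - A M (tat.P k) j|
      ≤ ∑ i, |M.e i * M.c i j / S M (tat.P κ) i - M.e i * M.c i j / S M (tat.P k) i| := by
    have e1 : A M (tat.P κ) j - A M (tat.P k) j
        = ∑ i, (M.e i * M.c i j / S M (tat.P κ) i - M.e i * M.c i j / S M (tat.P k) i) := by
      unfold A
      rw [← Finset.sum_sub_distrib]
    rw [e1]
    exact Finset.abs_sum_le_sum_abs _ _
  have hid : ∑ j', Xv tat (Lk tat k) k j' * G M (tat.P k) j j'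
      = ∑ i, M.e i * M.c i j * tat.P k j
          * (∑ j', Xv tat (Lk tat k) k j' * (M.c i j' * tat.P k j'))
          / (S M (tat.P k) i)^2 := by
    have e1 : ∑ j', Xv tat (Lk tat k) k j' * G M (tat.P k) j j'
        = ∑ j', ∑ i, Xv tat (Lk tat k) k j'
            * (M.e i * M.c i j * M.c i j' * tat.P k j * tat.P k j' / (S M (tat.P k) i)^2) := by
      apply Finset.sum_congr rfl
      intro j' _
      rw [G, Finset.mul_sum]
    rw [e1, Finset.sum_comm]
    apply Finset.sum_congr rfl
    intro i _
    rw [Finset.mul_sum, Finset.sum_div]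
    apply Finset.sum_congr rfl
    intro j' _
    field_simp
  rw [hid]
  have hq3 : 0 ≤ tat.P k j * (1-2*lam)^3 := by
    have := (hpk j).le
    positivity
  calc |A M (tat.P κ) j - A M (tat.P k) j| * (tat.P k j * (1-2*lam)^3)
      ≤ (∑ i, |M.e i * M.c i j / S M (tat.P κ) i - M.e i * M.c i j / S M (tat.P k) i|)
        * (tat.P k j * (1-2*lam)^3) := mul_le_mul_of_nonneg_right hsum hq3
  _ = ∑ i, |M.e i * M.c i j / S M (tat.P κ) i - M.e i * M.c i j / S M (tat.P k) i|
        * (tat.P k j * (1-2*lam)^3) := Finset.sum_mul _ _ _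
  _ ≤ ∑ i, M.e i * M.c i j * tat.P k j
        * (∑ j', Xv tat (Lk tat k) k j' * (M.c i j' * tat.P k j'))
        / (S M (tat.P k) i)^2 := Finset.sum_le_sum (fun i _ => hterm i)

lemma G_compare {κ k : ℕ} (h1 : Lk tat k ≤ κ) (h2 : κ ≤ k) (j j' : Fin n) :
    G M (tat.P k) j j' * (1-2*lam)^4 ≤ G M (tat.P κ) j j' := by
  have hpk : ∀ j'', 0 < tat.P k j'' := P_pos tat hm hlam0 hlam hp0 k
  have hpκ : ∀ j'', 0 < tat.P κ j'' := P_pos tat hm hlam0 hlam hp0 κ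
  have hSk : ∀ i, 0 < S M (tat.P k) i := S_pos M hpk
  have hSκ : ∀ i, 0 < S M (tat.P κ) i := S_pos M hpκ
  have hρ : (0:ℝ) < 1 - 2*lam := by linarith
  unfold G
  rw [Finset.sum_mul]
  apply Finset.sum_le_sum
  intro i _
  have hec : 0 ≤ M.e i * M.c i j * M.c i j' :=
    mul_nonneg (mul_nonneg (M.e_pos i).le (M.c_nonneg i j)) (M.c_nonneg i j')
  rw [div_mul_eq_mul_div, div_le_div_iff₀ (pow_pos (hSk i) 2) (pow_pos (hSκ i) 2)]
  have m1 : (1-2*lam) * tat.P k j ≤ tat.P κ j := price_lb' tat hm hlam0 hlam hp0 h1 h2 j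
  have m2 : (1-2*lam) * tat.P k j' ≤ tat.P κ j' := price_lb' tat hm hlam0 hlam hp0 h1 h2 j'
  have m3 : (1-2*lam) * S M (tat.P κ) i ≤ S M (tat.P k) i := S_ub tat hm hlam0 hlam hp0 h1 h2 i
  have t1 : ((1-2*lam) * tat.P k j) * ((1-2*lam) * tat.P k j') ≤ tat.P κ j * tat.P κ j' := by
    apply mul_le_mul m1 m2 (mul_nonneg hρ.le (hpk j').le) (hpκ j).le
  have t2 : ((1-2*lam) * S M (tat.P κ) i) * ((1-2*lam) * S M (tat.P κ) i)
      ≤ S M (tat.P k) i * S M (tat.P k) i := by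
    apply mul_le_mul m3 m3 (mul_nonneg hρ.le (hSκ i).le) (hSk i).le
  have t3 : (((1-2*lam) * tat.P k j) * ((1-2*lam) * tat.P k j'))
        * (((1-2*lam) * S M (tat.P κ) i) * ((1-2*lam) * S M (tat.P κ) i))
      ≤ (tat.P κ j * tat.P κ j') * (S M (tat.P k) i * S M (tat.P k) i) := by
    apply mul_le_mul t1 t2
      (mul_nonneg (mul_nonneg hρ.le (hSκ i).le) (mul_nonneg hρ.le (hSκ i).le))
      (mul_nonneg (hpκ j).le (hpκ j').le)
  have t4 := mul_le_mul_of_nonneg_left t3 hec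
  nlinarith [t4]

/-- the row-sum bound: total `De`-weighted kernel within an interval. -/
lemma cross_sum_le (k : ℕ) :
    ∑ k' ∈ Finset.Ico (Lk tat k) k, De tat k' * G M (tat.P k) (Jg tat k) (Jg tat k')
      ≤ 2 * (tat.P k (Jg tat k) * A M (tat.P k) (Jg tat k)) := by
  classical
  have hpk : ∀ j'', 0 < tat.P k j'' := P_pos tat hm hlam0 hlam hp0 k
  have e1 : ∑ k' ∈ Finset.Ico (Lk tat k) k, De tat k' * G M (tat.P k) (Jg tat k) (Jg tat k')
      = ∑ j' : Fin n, ∑ k' ∈ (Finset.Ico (Lk tat k) k).filter (fun k' => Jg tat k' = j'),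
          De tat k' * G M (tat.P k) (Jg tat k) (Jg tat k') :=
    (Finset.sum_fiberwise _ _ _).symm
  rw [e1]
  have e2 : ∀ j' : Fin n,
      ∑ k' ∈ (Finset.Ico (Lk tat k) k).filter (fun k' => Jg tat k' = j'),
          De tat k' * G M (tat.P k) (Jg tat k) (Jg tat k')
      = (∑ k' ∈ (Finset.Ico (Lk tat k) k).filter (fun k' => Jg tat k' = j'), De tat k')
          * G M (tat.P k) (Jg tat k) j' := by
    intro j'
    rw [Finset.sum_mul]
    apply Finset.sum_congr rfl
    intro k' hk'
    have := (Finset.mem_filter.1 hk').2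
    rw [this]
  have e3 : ∀ j' : Fin n,
      (∑ k' ∈ (Finset.Ico (Lk tat k) k).filter (fun k' => Jg tat k' = j'), De tat k')
          * G M (tat.P k) (Jg tat k) j'
      ≤ 2 * G M (tat.P k) (Jg tat k) j' := by
    intro j'
    apply mul_le_mul_of_nonneg_right _ (G_nonneg M (fun j'' => (hpk j'').le) _ _)
    have h4 : tat.T k ≤ tat.T (Lk tat k + 1) + 1 := by
      have h5 : tat.T k ≤ tat.T (k+1) := tat.T_mono.monotone (by omega)
      have h6 : tat.T (k+1) = tat.T (Lk tat k) + De tat k := by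
        unfold De
        rw [prevT_eq tat k]
        ring
      have h7 : tat.T (Lk tat k) ≤ tat.T (Lk tat k + 1) := tat.T_mono.monotone (by omega)
      have h8 := De_le_one tat k
      linarith
    exact gap_sum_two tat j' k (Lk tat k) h4
  calc ∑ j' : Fin n, ∑ k' ∈ (Finset.Ico (Lk tat k) k).filter (fun k' => Jg tat k' = j'),
          De tat k' * G M (tat.P k) (Jg tat k) (Jg tat k')
      ≤ ∑ j' : Fin n, 2 * G M (tat.P k) (Jg tat k) j' := by
        apply Finset.sum_le_sum
        intro j' _
        rw [e2 j']
        exact e3 j'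
  _ = 2 * ∑ j', G M (tat.P k) (Jg tat k) j' := by rw [Finset.mul_sum]
  _ = 2 * (tat.P k (Jg tat k) * A M (tat.P k) (Jg tat k)) := by
        rw [G_row_sum M hpk]

end Diff

section Master

variable {n m : ℕ} {M : LeontiefMarket n m} {lam : ℝ} {p0 : Fin n → ℝ}
variable (tat : Tatonnement n (lexcess M) lam p0)

/-- price of the good updated at step `k`, before the update. -/
noncomputable def qv (k : ℕ) : ℝ := tat.P k (Jg tat k)

/-- demand (`excess+1`) of the good updated at step `k`, before the update. -/
noncomputable def av (k : ℕ) : ℝ := A M (tat.P k) (Jg tat k)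

/-- basic step weight. -/
noncomputable def uv (k : ℕ) : ℝ := lam * De tat k * qv tat k * (mt tat k)^2

/-- demand-weighted step weight. -/
noncomputable def vv (k : ℕ) : ℝ := lam * De tat k * qv tat k * av tat k * (mt tat k)^2

/-- cross-charge of step `k`. -/
noncomputable def Cross2 (k : ℕ) : ℝ :=
  ∑ k' ∈ Finset.Ico (Lk tat k) k,
    De tat k' * (mt tat k')^2 * G M (tat.P k) (Jg tat k) (Jg tat k')

lemma alg2 (z a : ℝ) (hz : -1 ≤ z) :
    (1/2)*(min z 1)^2 + (1/4)*a*(min z 1)^2 - (5/4) * |min z 1| * |a - (z+1)|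
      ≤ (min z 1)*(a-1) := by
  rcases le_or_gt z 1 with hle | hlt
  · rw [min_eq_left hle]
    have habs1 : -(|z| * |a-1-z|) ≤ z*(a-1-z) := by
      rw [← abs_mul]; exact neg_abs_le _
    have habs2 : |a - (z+1)| = |a-1-z| := by congr 1; ring
    have hzabs : |z| ≤ 1 := abs_le.2 ⟨by linarith, hle⟩
    have hz2 : z^2 ≤ |z| := by nlinarith [abs_nonneg z, sq_abs z]
    rw [habs2]
    have h1 : (a-1-z) * z^2 ≤ |a-1-z| * z^2 :=
      mul_le_mul_of_nonneg_right (le_abs_self _) (sq_nonneg z)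
    have h2 : |a-1-z| * z^2 ≤ |a-1-z| * |z| :=
      mul_le_mul_of_nonneg_left hz2 (abs_nonneg _)
    have h4 : 0 ≤ z^2*(1-z) := mul_nonneg (sq_nonneg z) (by linarith)
    nlinarith [habs1, h1, h2, h4]
  · rw [min_eq_right hlt.le]
    have h1 : -(|a - (z+1)|) ≤ a - (z+1) := neg_abs_le _
    have h2 : 0 ≤ |a - (z+1)| := abs_nonneg _
    have h3 : |(1:ℝ)| = 1 := abs_one
    rw [h3]
    nlinarith

variable (hm : 1 ≤ m) (hlam0 : 0 < lam) (hlam : lam ≤ 2/51) (hp0 : ∀ j, 0 < p0 j)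

include hm hlam0 hlam hp0

lemma zt_lb (k : ℕ) : -1 ≤ zt tat k := by
  obtain ⟨⟨s₁, hs11, hs12, hs13⟩, _, _⟩ := zt_spec tat k
  obtain ⟨κ₁, hκ11, hκ12, hκ13⟩ := sample_idx tat k s₁ hs11 hs12
  have hpos1 : ∀ j, 0 < tat.P κ₁ j := P_pos tat hm hlam0 hlam hp0 κ₁
  rw [hκ13, lexcess_eq_A] at hs13
  have := A_nonneg M hpos1 (Jg tat k)
  linarith

lemma crossX_eq (k : ℕ) :
    ∑ j', Xv tat (Lk tat k) k j' * G M (tat.P k) (Jg tat k) j'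
      = ∑ k' ∈ Finset.Ico (Lk tat k) k,
          lam * |mt tat k'| * De tat k' * G M (tat.P k) (Jg tat k) (Jg tat k') := by
  classical
  rw [← Finset.sum_fiberwise (Finset.Ico (Lk tat k) k) (fun k' => Jg tat k')
    (fun k' => lam * |mt tat k'| * De tat k' * G M (tat.P k) (Jg tat k) (Jg tat k'))]
  apply Finset.sum_congr rfl
  intro j' _
  rw [Xv, Finset.sum_mul]
  apply Finset.sum_congr rfl
  intro k' hk'
  have := (Finset.mem_filter.1 hk').2
  rw [this]

lemma q_adiff (k : ℕ) :
    |av tat k - (zt tat k + 1)| * (qv tat k * (1-2*lam)^3)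
      ≤ ∑ k' ∈ Finset.Ico (Lk tat k) k,
          lam * |mt tat k'| * De tat k' * G M (tat.P k) (Jg tat k) (Jg tat k') := by
  rw [← crossX_eq tat hm hlam0 hlam hp0 k]
  obtain ⟨⟨s₁, hs11, hs12, hs13⟩, ⟨s₂, hs21, hs22, hs23⟩, _⟩ := zt_spec tat k
  obtain ⟨κ₁, hκ11, hκ12, hκ13⟩ := sample_idx tat k s₁ hs11 hs12
  obtain ⟨κ₂, hκ21, hκ22, hκ23⟩ := sample_idx tat k s₂ hs21 hs22
  rw [hκ13, lexcess_eq_A] at hs13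
  rw [hκ23, lexcess_eq_A] at hs23
  have hq3 : 0 ≤ qv tat k * (1-2*lam)^3 := by
    have := (P_pos tat hm hlam0 hlam hp0 k (Jg tat k)).le
    have : (0:ℝ) ≤ 1-2*lam := by linarith
    unfold qv
    positivity
  rcases le_total (zt tat k + 1) (av tat k) with hc | hc
  · have h1 : |av tat k - (zt tat k + 1)| ≤ |A M (tat.P κ₁) (Jg tat k) - av tat k| := by
      rw [abs_of_nonneg (by linarith)]
      have : av tat k - (zt tat k + 1) ≤ av tat k - A M (tat.P κ₁) (Jg tat k) := by linarith
      calc av tat k - (zt tat k + 1) ≤ av tat k - A M (tat.P κ₁) (Jg tat k) := this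
      _ ≤ |av tat k - A M (tat.P κ₁) (Jg tat k)| := le_abs_self _
      _ = |A M (tat.P κ₁) (Jg tat k) - av tat k| := abs_sub_comm _ _
    calc |av tat k - (zt tat k + 1)| * (qv tat k * (1-2*lam)^3)
        ≤ |A M (tat.P κ₁) (Jg tat k) - av tat k| * (qv tat k * (1-2*lam)^3) :=
          mul_le_mul_of_nonneg_right h1 hq3
    _ ≤ _ := A_diff tat hm hlam0 hlam hp0 hκ11 hκ12
  · have h1 : |av tat k - (zt tat k + 1)| ≤ |A M (tat.P κ₂) (Jg tat k) - av tat k| := by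
      rw [abs_of_nonpos (by linarith)]
      have : (zt tat k + 1) - av tat k ≤ A M (tat.P κ₂) (Jg tat k) - av tat k := by linarith
      calc -(av tat k - (zt tat k + 1)) = (zt tat k + 1) - av tat k := by ring
      _ ≤ A M (tat.P κ₂) (Jg tat k) - av tat k := this
      _ ≤ |A M (tat.P κ₂) (Jg tat k) - av tat k| := le_abs_self _
    calc |av tat k - (zt tat k + 1)| * (qv tat k * (1-2*lam)^3)
        ≤ |A M (tat.P κ₂) (Jg tat k) - av tat k| * (qv tat k * (1-2*lam)^3) :=
          mul_le_mul_of_nonneg_right h1 hq3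
    _ ≤ _ := A_diff tat hm hlam0 hlam hp0 hκ21 hκ22

set_option maxHeartbeats 2000000 in
lemma pstep (k : ℕ) :
    phi M (tat.P (k+1)) - phi M (tat.P k)
      ≤ -(1/2) * uv tat k - (1/10) * vv tat k + (13/16) * lam^2 * Cross2 tat k := by
  have hpk : ∀ j', 0 < tat.P k j' := P_pos tat hm hlam0 hlam hp0 k
  have hq : 0 < tat.P k (Jg tat k) := hpk _
  have ha : 0 ≤ A M (tat.P k) (Jg tat k) := A_nonneg M hpk _
  have hD0 := De_pos tat k
  have hD1 := De_le_one tat k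
  have hmta := abs_mt_le_one tat hm hlam0 hlam hp0 k
  set δ := lam * mt tat k * De tat k with hδdef
  have hδ : |δ| ≤ lam := by
    rw [hδdef, abs_mul, abs_mul, abs_of_nonneg hlam0.le, abs_of_nonneg hD0.le]
    nlinarith [mul_le_mul_of_nonneg_left (mul_le_mul hmta hD1 hD0.le zero_le_one) hlam0.le]
  have hPfun : tat.P (k+1)
      = Function.update (tat.P k) (Jg tat k) (tat.P k (Jg tat k) * (1 + δ)) := by
    funext j'
    by_cases hj : j' = Jg tat k
    · subst hj
      rw [Function.update_self]
      exact P_step tat k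
    · rw [Function.update_of_ne hj]
      exact tat.update_other k j' hj
  have hstep := phi_step M hlam0 hlam (tat.P k) hpk (Jg tat k) δ hδ
  rw [← hPfun] at hstep
  -- abbreviations
  set Q := tat.P k (Jg tat k) with hQdef
  set Aa := A M (tat.P k) (Jg tat k) with hAadef
  set Dk := De tat k with hDkdef
  set mtk := mt tat k with hmtkdef
  set CX := ∑ k' ∈ Finset.Ico (Lk tat k) k,
      lam * |mt tat k'| * De tat k' * G M (tat.P k) (Jg tat k) (Jg tat k') with hCXdef
  set S2 := ∑ k' ∈ Finset.Ico (Lk tat k) k,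
      De tat k' * (mt tat k')^2 * G M (tat.P k) (Jg tat k) (Jg tat k') with hS2def
  set SG := ∑ k' ∈ Finset.Ico (Lk tat k) k,
      De tat k' * G M (tat.P k) (Jg tat k) (Jg tat k') with hSGdef
  -- first order algebra
  have halg := alg2 (zt tat k) Aa (zt_lb tat hm hlam0 hlam hp0 k)
  have hmtdef : min (zt tat k) 1 = mtk := rfl
  rw [hmtdef] at halg
  have h2 : lam * Dk * Q * ((1/2)*mtk^2 + (1/4)*Aa*mtk^2 - (5/4) * |mtk| * |Aa - (zt tat k + 1)|)
      ≤ lam * Dk * Q * (mtk*(Aa-1)) := by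
    apply mul_le_mul_of_nonneg_left halg
    have := hD0.le
    have := hq.le
    positivity
  have h3 : Q * δ * (1 - Aa) = -(lam * Dk * Q * (mtk*(Aa-1))) := by
    rw [hδdef]
    ring
  -- error bound via q_adiff
  have h4 := q_adiff tat hm hlam0 hlam hp0 k
  have h4' : |Aa - (zt tat k + 1)| * (Q * (1-2*lam)^3) ≤ CX := h4
  have hcube : ((47:ℝ)/51)^3 ≤ (1-2*lam)^3 := by
    apply pow_le_pow_left₀ (by norm_num)
    linarith
  have hρ3 : (5:ℝ)/4 ≤ (13/8)*(1-2*lam)^3 := by nlinarith [hcube]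
  have habsQ : 0 ≤ |Aa - (zt tat k + 1)| * Q := mul_nonneg (abs_nonneg _) hq.le
  have h5 : (5/4) * (Q * |Aa - (zt tat k + 1)|) ≤ (13/8) * CX := by
    nlinarith [h4', mul_le_mul_of_nonneg_left hρ3 habsQ]
  have hldm : 0 ≤ lam * Dk * |mtk| := by
    have := hD0.le
    positivity
  have h5' : (lam * Dk * |mtk|) * ((5/4) * (Q * |Aa - (zt tat k + 1)|))
      ≤ (lam * Dk * |mtk|) * ((13/8) * CX) := mul_le_mul_of_nonneg_left h5 hldm
  -- AM-GM on CX
  have h6 : lam * Dk * |mtk| * CX ≤ (lam^2/2) * (Dk*mtk^2) * SG + (lam^2/2) * S2 := by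
    rw [hCXdef, Finset.mul_sum]
    have hterm : ∀ k' ∈ Finset.Ico (Lk tat k) k,
        lam * Dk * |mtk| * (lam * |mt tat k'| * De tat k'
            * G M (tat.P k) (Jg tat k) (Jg tat k'))
        ≤ (lam^2/2) * (Dk*mtk^2) * (De tat k' * G M (tat.P k) (Jg tat k) (Jg tat k'))
          + (lam^2/2) * (De tat k' * (mt tat k')^2
              * G M (tat.P k) (Jg tat k) (Jg tat k')) := by
      intro k' _
      have hD'0 := De_pos tat k'
      have hD'1 := De_le_one tat k'
      have hGnn : 0 ≤ G M (tat.P k) (Jg tat k) (Jg tat k') :=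
        G_nonneg M (fun j'' => (hpk j'').le) _ _
      have hsc : Dk * |mtk| * (|mt tat k'| * De tat k')
          ≤ (1/2) * (Dk * mtk^2 * De tat k' + De tat k' * (mt tat k')^2) := by
        have inner : 0 ≤ mtk^2 + (mt tat k')^2 - 2*(|mtk| * |mt tat k'|) := by
          nlinarith [sq_abs mtk, sq_abs (mt tat k'), sq_nonneg (|mtk| - |mt tat k'|)]
        nlinarith [mul_nonneg (mul_nonneg hD0.le hD'0.le) inner,
          mul_nonneg (by linarith : (0:ℝ) ≤ 1 - Dk)
            (mul_nonneg hD'0.le (sq_nonneg (mt tat k')))]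
      have hl2G : 0 ≤ lam^2 * G M (tat.P k) (Jg tat k) (Jg tat k') := by positivity
      have := mul_le_mul_of_nonneg_left hsc hl2G
      nlinarith [this]
    calc ∑ k' ∈ Finset.Ico (Lk tat k) k, lam * Dk * |mtk| * (lam * |mt tat k'| * De tat k'
            * G M (tat.P k) (Jg tat k) (Jg tat k'))
        ≤ ∑ k' ∈ Finset.Ico (Lk tat k) k,
          ((lam^2/2) * (Dk*mtk^2) * (De tat k' * G M (tat.P k) (Jg tat k) (Jg tat k'))
          + (lam^2/2) * (De tat k' * (mt tat k')^2
              * G M (tat.P k) (Jg tat k) (Jg tat k'))) := Finset.sum_le_sum hterm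
    _ = (lam^2/2) * (Dk*mtk^2) * SG + (lam^2/2) * S2 := by
        rw [Finset.sum_add_distrib, hSGdef, hS2def, Finset.mul_sum, Finset.mul_sum]
  have hSG2 : (lam^2/2) * (Dk*mtk^2) * SG ≤ (lam^2/2) * (Dk*mtk^2) * (2*(Q*Aa)) := by
    apply mul_le_mul_of_nonneg_left (cross_sum_le tat hm hlam0 hlam hp0 k)
    positivity
  -- second order
  have hso : δ^2 * (Q * Aa) / (1-lam) ≤ (2/49) * (lam * Dk * Q * Aa * mtk^2) := by
    rw [div_le_iff₀ (by linarith : (0:ℝ) < 1 - lam), hδdef]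
    have t0 : 0 ≤ lam*Dk*mtk^2*Q*Aa := by
      have := hD0.le
      have := hq.le
      positivity
    have hs : lam*Dk ≤ (2/49)*(1-lam) := by nlinarith
    nlinarith [mul_le_mul_of_nonneg_right hs t0]
  -- lam smallness for the vv-bucket
  have hvmono : 0 ≤ lam * Dk * Q * Aa * mtk^2 := by
    have := hD0.le
    have := hq.le
    positivity
  have hB : lam * (lam * Dk * Q * Aa * mtk^2) ≤ (2/51) * (lam * Dk * Q * Aa * mtk^2) :=
    mul_le_mul_of_nonneg_right hlam hvmono
  -- assemble
  unfold uv vv Cross2 qv av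
  rw [← hQdef, ← hAadef, ← hDkdef, ← hmtkdef, ← hS2def]
  nlinarith [hstep, h2, h3, h5', h6, hSG2, hso, hB, hvmono]


end Master

section Sum

variable {n m : ℕ} {M : LeontiefMarket n m} {lam : ℝ} {p0 : Fin n → ℝ}
variable (tat : Tatonnement n (lexcess M) lam p0)

/-- a uniform upper bound for bundle costs along the tatonnement. -/
noncomputable def Smax (M : LeontiefMarket n m) (lam : ℝ) (p0 : Fin n → ℝ) : ℝ :=
  (∑ i, ∑ j, M.c i j) * Bp M lam p0 + 1

variable (hm : 1 ≤ m) (hlam0 : 0 < lam) (hlam : lam ≤ 2/51) (hp0 : ∀ j, 0 < p0 j)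

include hm hlam0 hlam hp0

lemma Bp_pos : 0 < Bp M lam p0 := by
  have h1 := Etot_pos (M := M) hm hlam0 hlam hp0
  have h2 : (0:ℝ) ≤ ∑ j, p0 j := Finset.sum_nonneg fun j _ => (hp0 j).le
  unfold Bp
  nlinarith

lemma S_le_Smax (k : ℕ) (i : Fin m) : S M (tat.P k) i ≤ Smax M lam p0 := by
  have hB := Bp_pos (M := M) hm hlam0 hlam hp0
  unfold Smax S
  have h1 : ∑ j, M.c i j * tat.P k j ≤ ∑ j, M.c i j * Bp M lam p0 := by
    apply Finset.sum_le_sum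
    intro j _
    exact mul_le_mul_of_nonneg_left (P_le tat hm hlam0 hlam hp0 k j) (M.c_nonneg i j)
  have h2 : ∑ j, M.c i j * Bp M lam p0 = (∑ j, M.c i j) * Bp M lam p0 := by
    rw [Finset.sum_mul]
  have h3 : (∑ j, M.c i j) * Bp M lam p0 ≤ (∑ i', ∑ j, M.c i' j) * Bp M lam p0 := by
    apply mul_le_mul_of_nonneg_right _ hB.le
    apply Finset.single_le_sum (f := fun i' => ∑ j, M.c i' j) _ (Finset.mem_univ i)
    intro i' _
    exact Finset.sum_nonneg fun j _ => M.c_nonneg i' j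
  linarith

lemma phi_lb (k : ℕ) :
    -(Etot M * Real.log (Smax M lam p0)) ≤ phi M (tat.P k) := by
  have hpk : ∀ j', 0 < tat.P k j' := P_pos tat hm hlam0 hlam hp0 k
  have h1 : 0 ≤ ∑ j, tat.P k j := Finset.sum_nonneg fun j _ => (hpk j).le
  have h2 : ∑ i, M.e i * Real.log (S M (tat.P k) i)
      ≤ ∑ i, M.e i * Real.log (Smax M lam p0) := by
    apply Finset.sum_le_sum
    intro i _
    apply mul_le_mul_of_nonneg_left _ (M.e_pos i).le
    apply Real.log_le_log (S_pos M hpk i)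
    exact S_le_Smax tat hm hlam0 hlam hp0 k i
  have h3 : ∑ i, M.e i * Real.log (Smax M lam p0)
      = Etot M * Real.log (Smax M lam p0) := by
    rw [Etot, Finset.sum_mul]
  unfold phi
  linarith [h2, h3 ▸ h2]

lemma uv_nonneg (k : ℕ) : 0 ≤ uv tat k := by
  unfold uv qv
  have := (De_pos tat k).le
  have := (P_pos tat hm hlam0 hlam hp0 k (Jg tat k)).le
  positivity

lemma vv_nonneg (k : ℕ) : 0 ≤ vv tat k := by
  unfold vv qv av
  have := (De_pos tat k).le
  have := (P_pos tat hm hlam0 hlam hp0 k (Jg tat k)).le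
  have := A_nonneg M (P_pos tat hm hlam0 hlam hp0 k) (Jg tat k)
  positivity

lemma Cross2_nonneg (k : ℕ) : 0 ≤ Cross2 tat k := by
  unfold Cross2
  apply Finset.sum_nonneg
  intro k' _
  have h1 := (De_pos tat k').le
  have h2 : 0 ≤ G M (tat.P k) (Jg tat k) (Jg tat k') :=
    G_nonneg M (fun j => (P_pos tat hm hlam0 hlam hp0 k j).le) _ _
  positivity

lemma cross_total (N : ℕ) :
    lam * ((1-2*lam)^4 * ∑ k ∈ Finset.range N, Cross2 tat k)
      ≤ ∑ k' ∈ Finset.range N, vv tat k' := by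
  classical
  have hswap : ∑ k ∈ Finset.range N, ∑ k' ∈ Finset.Ico (Lk tat k) k,
        (lam * (1-2*lam)^4) * (De tat k' * (mt tat k')^2
          * G M (tat.P k) (Jg tat k) (Jg tat k'))
      = ∑ k' ∈ Finset.range N, ∑ k ∈ (Finset.range N).filter
          (fun k => k' ∈ Finset.Ico (Lk tat k) k),
        (lam * (1-2*lam)^4) * (De tat k' * (mt tat k')^2
          * G M (tat.P k) (Jg tat k) (Jg tat k')) := by
    apply Finset.sum_comm'
    intro k k'
    simp only [Finset.mem_range, Finset.mem_filter, Finset.mem_Ico]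
    omega
  have e0 : lam * ((1-2*lam)^4 * ∑ k ∈ Finset.range N, Cross2 tat k)
      = ∑ k ∈ Finset.range N, ∑ k' ∈ Finset.Ico (Lk tat k) k,
        (lam * (1-2*lam)^4) * (De tat k' * (mt tat k')^2
          * G M (tat.P k) (Jg tat k) (Jg tat k')) := by
    unfold Cross2
    rw [Finset.mul_sum, Finset.mul_sum]
    apply Finset.sum_congr rfl
    intro k _
    rw [Finset.mul_sum, Finset.mul_sum]
    apply Finset.sum_congr rfl
    intro k' _
    ring
  rw [e0, hswap]
  apply Finset.sum_le_sum
  intro k' hk'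
  -- inner bound
  have hρ : (0:ℝ) < 1 - 2*lam := by linarith
  have hinner : ∑ k ∈ (Finset.range N).filter (fun k => k' ∈ Finset.Ico (Lk tat k) k),
      (1-2*lam)^4 * G M (tat.P k) (Jg tat k) (Jg tat k')
      ≤ qv tat k' * av tat k' := by
    have hstep1 : ∀ k ∈ (Finset.range N).filter (fun k => k' ∈ Finset.Ico (Lk tat k) k),
        (1-2*lam)^4 * G M (tat.P k) (Jg tat k) (Jg tat k')
          ≤ G M (tat.P k') (Jg tat k) (Jg tat k') := by
      intro k hk
      simp only [Finset.mem_filter, Finset.mem_Ico] at hk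
      have h := G_compare tat hm hlam0 hlam hp0 (κ := k') (k := k)
        hk.2.1 (by omega) (Jg tat k) (Jg tat k')
      linarith [h]
    have hstep2 : ∑ k ∈ (Finset.range N).filter (fun k => k' ∈ Finset.Ico (Lk tat k) k),
        G M (tat.P k') (Jg tat k) (Jg tat k')
        ≤ ∑ j : Fin n, G M (tat.P k') j (Jg tat k') := by
      have hinj : ∀ k₁ ∈ (Finset.range N).filter (fun k => k' ∈ Finset.Ico (Lk tat k) k),
          ∀ k₂ ∈ (Finset.range N).filter (fun k => k' ∈ Finset.Ico (Lk tat k) k),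
          Jg tat k₁ = Jg tat k₂ → k₁ = k₂ := by
        intro k₁ hk₁ k₂ hk₂ hJ
        simp only [Finset.mem_filter, Finset.mem_Ico] at hk₁ hk₂
        by_contra hne
        -- wlog k₁ < k₂
        rcases Nat.lt_or_ge k₁ k₂ with hlt | hge
        · have hL : k₁ + 1 ≤ Lk tat k₂ := by
            by_contra hcon
            push_neg at hcon
            exact (Lk_max tat k₂ (k₁+1) (by omega) (by omega)) hJ
          omega
        · have hlt : k₂ < k₁ := by omega
          have hL : k₂ + 1 ≤ Lk tat k₁ := by
            by_contra hcon
            push_neg at hcon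
            exact (Lk_max tat k₁ (k₂+1) (by omega) (by omega)) hJ.symm
          omega
      have himg : (∑ j ∈ ((Finset.range N).filter
              (fun k => k' ∈ Finset.Ico (Lk tat k) k)).image (fun k => Jg tat k),
            G M (tat.P k') j (Jg tat k'))
          = ∑ k ∈ (Finset.range N).filter (fun k => k' ∈ Finset.Ico (Lk tat k) k),
            G M (tat.P k') (Jg tat k) (Jg tat k') :=
        Finset.sum_image hinj
      rw [← himg]
      apply Finset.sum_le_sum_of_subset_of_nonneg (Finset.subset_univ _)
      intro j _ _
      exact G_nonneg M (fun j'' => (P_pos tat hm hlam0 hlam hp0 k' j'').le) _ _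
    have hstep3 : ∑ j : Fin n, G M (tat.P k') j (Jg tat k') = qv tat k' * av tat k' := by
      have : ∀ j : Fin n, G M (tat.P k') j (Jg tat k') = G M (tat.P k') (Jg tat k') j :=
        fun j => G_symm M _ _ _
      rw [Finset.sum_congr rfl (fun j _ => this j)]
      rw [G_row_sum M (P_pos tat hm hlam0 hlam hp0 k')]
      rfl
    calc ∑ k ∈ (Finset.range N).filter (fun k => k' ∈ Finset.Ico (Lk tat k) k),
        (1-2*lam)^4 * G M (tat.P k) (Jg tat k) (Jg tat k')
        ≤ ∑ k ∈ (Finset.range N).filter (fun k => k' ∈ Finset.Ico (Lk tat k) k),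
          G M (tat.P k') (Jg tat k) (Jg tat k') := Finset.sum_le_sum hstep1
    _ ≤ ∑ j : Fin n, G M (tat.P k') j (Jg tat k') := hstep2
    _ = qv tat k' * av tat k' := hstep3
  have hw : 0 ≤ lam * (De tat k' * (mt tat k')^2) := by
    have := (De_pos tat k').le
    positivity
  have := mul_le_mul_of_nonneg_left hinner hw
  unfold vv
  calc ∑ k ∈ (Finset.range N).filter (fun k => k' ∈ Finset.Ico (Lk tat k) k),
      (lam * (1-2*lam)^4) * (De tat k' * (mt tat k')^2
          * G M (tat.P k) (Jg tat k) (Jg tat k'))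
      = lam * (De tat k' * (mt tat k')^2)
        * ∑ k ∈ (Finset.range N).filter (fun k => k' ∈ Finset.Ico (Lk tat k) k),
          (1-2*lam)^4 * G M (tat.P k) (Jg tat k) (Jg tat k') := by
        rw [Finset.mul_sum]
        apply Finset.sum_congr rfl
        intro k _
        ring
  _ ≤ lam * (De tat k' * (mt tat k')^2) * (qv tat k' * av tat k') := this
  _ = lam * De tat k' * qv tat k' * av tat k' * (mt tat k')^2 := by ring

lemma sum_uv_le (N : ℕ) :
    ∑ k ∈ Finset.range N, uv tat k
      ≤ 2 * (phi M (tat.P 0) + Etot M * Real.log (Smax M lam p0)) := by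
  have htele : phi M (tat.P N) - phi M (tat.P 0)
      ≤ ∑ k ∈ Finset.range N, (-(1/2) * uv tat k - (1/10) * vv tat k
          + (13/16) * lam^2 * Cross2 tat k) := by
    induction N with
    | zero => simp
    | succ N ih =>
      rw [Finset.sum_range_succ]
      have := pstep tat hm hlam0 hlam hp0 N
      linarith
  have hsplit : ∑ k ∈ Finset.range N, (-(1/2) * uv tat k - (1/10) * vv tat k
        + (13/16) * lam^2 * Cross2 tat k)
      = -(1/2) * ∑ k ∈ Finset.range N, uv tat k
        - (1/10) * ∑ k ∈ Finset.range N, vv tat k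
        + (13/16) * lam^2 * ∑ k ∈ Finset.range N, Cross2 tat k := by
    rw [Finset.sum_add_distrib, Finset.sum_sub_distrib, ← Finset.mul_sum, ← Finset.mul_sum,
      ← Finset.mul_sum]
  have hcross := cross_total tat hm hlam0 hlam hp0 N
  have hC0 : 0 ≤ ∑ k ∈ Finset.range N, Cross2 tat k :=
    Finset.sum_nonneg fun k _ => Cross2_nonneg tat hm hlam0 hlam hp0 k
  have hv0 : 0 ≤ ∑ k ∈ Finset.range N, vv tat k :=
    Finset.sum_nonneg fun k _ => vv_nonneg tat hm hlam0 hlam hp0 k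
  -- (13/16) lam^2 ΣC ≤ (1/10) Σv
  have hquart : ((47:ℝ)/51)^4 ≤ (1-2*lam)^4 := by
    apply pow_le_pow_left₀ (by norm_num)
    linarith
  have hscal : (13/16) * lam ≤ (1/10) * (1-2*lam)^4 := by nlinarith [hquart]
  have hC2 : (13/16) * lam^2 * ∑ k ∈ Finset.range N, Cross2 tat k
      ≤ (1/10) * ∑ k ∈ Finset.range N, vv tat k := by
    have e1 : (13/16) * lam * (lam * ∑ k ∈ Finset.range N, Cross2 tat k)
        ≤ ((1/10) * (1-2*lam)^4) * (lam * ∑ k ∈ Finset.range N, Cross2 tat k) := by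
      apply mul_le_mul_of_nonneg_right hscal
      positivity
    have e2 : ((1/10) * (1-2*lam)^4) * (lam * ∑ k ∈ Finset.range N, Cross2 tat k)
        = (1/10) * (lam * ((1-2*lam)^4 * ∑ k ∈ Finset.range N, Cross2 tat k)) := by ring
    have e3 : (1/10) * (lam * ((1-2*lam)^4 * ∑ k ∈ Finset.range N, Cross2 tat k))
        ≤ (1/10) * ∑ k ∈ Finset.range N, vv tat k := by
      apply mul_le_mul_of_nonneg_left hcross
      norm_num
    nlinarith [e1, e2 ▸ e1, e3]
  have hlb := phi_lb tat hm hlam0 hlam hp0 N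
  linarith [htele, hsplit ▸ htele, hC2, hv0, hlb]

end Sum

lemma tele (f : ℕ → ℝ) : ∀ a b : ℕ, a ≤ b →
    |f b - f a| ≤ ∑ k ∈ Finset.Ico a b, |f (k+1) - f k| := by
  intro a b hab
  induction b, hab using Nat.le_induction with
  | base => simp
  | succ b hb ih =>
    rw [Finset.sum_Ico_succ_top (by omega)]
    calc |f (b+1) - f a| ≤ |f (b+1) - f b| + |f b - f a| := by
          have := abs_sub_le (f (b+1)) (f b) (f a)
          linarith
    _ ≤ |f (b+1) - f b| + ∑ k ∈ Finset.Ico a b, |f (k+1) - f k| := by linarith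
    _ = (∑ k ∈ Finset.Ico a b, |f (k+1) - f k|) + |f (b+1) - f b| := by ring

end S15

end Aux

/-- in a Fisher market where every buyer has a Leontief utility, for any
asynchronous tatonnement with step-size `λ ≤ 1/25.5` starting from positive prices,
for every `ε > 0` there is a finite time `T_ε` such that for every good `j`, every
`t ≥ T_ε` and every `Δt ∈ [0,1]`, `|p_j(t) − p_j(t+Δt)| ≤ ε`. -/
theorem stmt_15 (n m : ℕ) (hn : 1 ≤ n) (hm : 1 ≤ m) (M : LeontiefMarket n m)
    (lam : ℝ) (hlam0 : 0 < lam) (hlam1 : lam ≤ 1 / 25.5)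
    (p0 : Fin n → ℝ) (hp0 : ∀ j, 0 < p0 j)
    (tat : Tatonnement n (lexcess M) lam p0) :
    ∀ ε : ℝ, 0 < ε → ∃ Tε : ℝ, ∀ (j : Fin n) (t Δt : ℝ),
      Tε ≤ t → 0 ≤ Δt → Δt ≤ 1 →
      |tat.traj t j - tat.traj (t + Δt) j| ≤ ε := by
  classical
  have hlam : lam ≤ 2/51 := by
    have : (1:ℝ)/25.5 = 2/51 := by norm_num
    linarith [this ▸ hlam1]
  intro ε hε
  have hB := S15.Bp_pos (M := M) (lam := lam) (p0 := p0) hm hlam0 hlam hp0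
  have hnn : ∀ k, 0 ≤ S15.uv tat k := S15.uv_nonneg tat hm hlam0 hlam hp0
  have hbd : ∀ N, ∑ k ∈ Finset.range N, S15.uv tat k
      ≤ 2 * (S15.phi M (tat.P 0) + S15.Etot M * Real.log (S15.Smax M lam p0)) :=
    S15.sum_uv_le tat hm hlam0 hlam hp0
  have hsum : Summable (fun k => S15.uv tat k) :=
    summable_of_sum_range_le hnn hbd
  set ε' := ε^2 / (2*lam*S15.Bp M lam p0) with hε'def
  have hε' : 0 < ε' := by
    rw [hε'def]
    positivity
  obtain ⟨s, hs⟩ := summable_iff_vanishing.1 hsum (Metric.ball 0 ε')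
    (Metric.ball_mem_nhds 0 hε')
  set K := s.sup id + 1 with hKdef
  refine ⟨tat.T K, ?_⟩
  intro j t Δt hT hΔ0 hΔ1
  have ht0 : 0 ≤ t := le_trans (S15.T_nonneg tat K) hT
  obtain ⟨κ₀, hκ01, hκ02, hκ03⟩ := S15.exists_idx tat t ht0
  obtain ⟨κ₁, hκ11, hκ12, hκ13⟩ := S15.exists_idx tat (t+Δt) (by linarith)
  have hκ0K : K ≤ κ₀ := by
    have h1 : tat.T K < tat.T (κ₀+1) := lt_of_le_of_lt hT hκ02
    have := tat.T_mono.lt_iff_lt.1 h1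
    omega
  have hκle : κ₀ ≤ κ₁ := by
    have h1 : tat.T κ₀ < tat.T (κ₁+1) := by linarith
    have := tat.T_mono.lt_iff_lt.1 h1
    omega
  rw [hκ03, hκ13]
  -- telescoping
  have htele := S15.tele (fun k => tat.P k j) κ₀ κ₁ hκle
  have habs : |tat.P κ₀ j - tat.P κ₁ j| = |tat.P κ₁ j - tat.P κ₀ j| := abs_sub_comm _ _
  -- each step
  have hterm : ∀ k ∈ Finset.Ico κ₀ κ₁, |tat.P (k+1) j - tat.P k j|
      = if S15.Jg tat k = j then lam * tat.P k j * |S15.mt tat k| * S15.De tat k else 0 := by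
    intro k _
    by_cases hgk : S15.Jg tat k = j
    · rw [if_pos hgk, ← hgk]
      rw [S15.P_step tat k]
      have hPk := S15.P_pos tat hm hlam0 hlam hp0 k (S15.Jg tat k)
      have hDe := S15.De_pos tat k
      have e1 : tat.P k (S15.Jg tat k) * (1 + lam * S15.mt tat k * S15.De tat k)
          - tat.P k (S15.Jg tat k)
          = tat.P k (S15.Jg tat k) * (lam * S15.mt tat k * S15.De tat k) := by ring
      rw [e1, abs_mul, abs_mul, abs_mul, abs_of_pos hPk, abs_of_pos hlam0,
        abs_of_pos hDe]
      ring
    · rw [if_neg hgk]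
      rw [tat.update_other k j (fun hc => hgk hc.symm)]
      simp
  have hsum1 : ∑ k ∈ Finset.Ico κ₀ κ₁, |tat.P (k+1) j - tat.P k j|
      = ∑ k ∈ (Finset.Ico κ₀ κ₁).filter (fun k => S15.Jg tat k = j),
          lam * tat.P k j * |S15.mt tat k| * S15.De tat k := by
    rw [Finset.sum_congr rfl hterm, Finset.sum_filter]
  set F := (Finset.Ico κ₀ κ₁).filter (fun k => S15.Jg tat k = j) with hFdef
  -- Cauchy-Schwarz
  have hCS := Finset.sum_mul_sq_le_sq_mul_sq F
    (fun k => Real.sqrt (lam * tat.P k j * S15.De tat k))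
    (fun k => Real.sqrt (lam * tat.P k j * S15.De tat k) * |S15.mt tat k|)
  have hxnn : ∀ k, 0 ≤ lam * tat.P k j * S15.De tat k := by
    intro k
    have := (S15.P_pos tat hm hlam0 hlam hp0 k j).le
    have := (S15.De_pos tat k).le
    positivity
  have hfg : ∀ k, Real.sqrt (lam * tat.P k j * S15.De tat k)
        * (Real.sqrt (lam * tat.P k j * S15.De tat k) * |S15.mt tat k|)
      = lam * tat.P k j * |S15.mt tat k| * S15.De tat k := by
    intro k
    rw [← mul_assoc, Real.mul_self_sqrt (hxnn k)]
    ring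
  have hf2 : ∀ k, (Real.sqrt (lam * tat.P k j * S15.De tat k))^2
      = lam * tat.P k j * S15.De tat k := fun k => Real.sq_sqrt (hxnn k)
  have hg2 : ∀ k, (Real.sqrt (lam * tat.P k j * S15.De tat k) * |S15.mt tat k|)^2
      = lam * S15.De tat k * tat.P k j * (S15.mt tat k)^2 := by
    intro k
    rw [mul_pow, Real.sq_sqrt (hxnn k), sq_abs]
    ring
  -- bound Σ f² by 2 lam Bp
  have hDsum : ∑ k ∈ F, S15.De tat k ≤ 2 := by
    apply S15.gap_sum_two tat j κ₁ κ₀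
    have h1 : tat.T κ₁ ≤ t + Δt := hκ11
    have h2 : t < tat.T (κ₀+1) := hκ02
    linarith
  have hfsq : ∑ k ∈ F, (Real.sqrt (lam * tat.P k j * S15.De tat k))^2
      ≤ 2 * lam * S15.Bp M lam p0 := by
    rw [Finset.sum_congr rfl (fun k _ => hf2 k)]
    have h1 : ∀ k ∈ F, lam * tat.P k j * S15.De tat k
        ≤ lam * S15.Bp M lam p0 * S15.De tat k := by
      intro k _
      apply mul_le_mul_of_nonneg_right _ (S15.De_pos tat k).le
      apply mul_le_mul_of_nonneg_left (S15.P_le tat hm hlam0 hlam hp0 k j) hlam0.le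
    calc ∑ k ∈ F, lam * tat.P k j * S15.De tat k
        ≤ ∑ k ∈ F, lam * S15.Bp M lam p0 * S15.De tat k := Finset.sum_le_sum h1
    _ = lam * S15.Bp M lam p0 * ∑ k ∈ F, S15.De tat k := by rw [Finset.mul_sum]
    _ ≤ lam * S15.Bp M lam p0 * 2 := by
        apply mul_le_mul_of_nonneg_left hDsum
        positivity
    _ = 2 * lam * S15.Bp M lam p0 := by ring
  -- bound Σ g² by ε'
  have hdisj : Disjoint F s := by
    rw [Finset.disjoint_left]
    intro k hkF hks
    have h1 : κ₀ ≤ k := by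
      have := (Finset.mem_Ico.1 (Finset.mem_filter.1 hkF).1).1
      omega
    have h2 : k ≤ s.sup id := Finset.le_sup (f := id) hks
    omega
  have hgs := hs F hdisj
  rw [Metric.mem_ball, Real.dist_eq, sub_zero] at hgs
  have hgsq : ∑ k ∈ F, (Real.sqrt (lam * tat.P k j * S15.De tat k) * |S15.mt tat k|)^2
      ≤ ε' := by
    rw [Finset.sum_congr rfl (fun k _ => hg2 k)]
    have e1 : ∑ k ∈ F, lam * S15.De tat k * tat.P k j * (S15.mt tat k)^2
        = ∑ k ∈ F, S15.uv tat k := by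
      apply Finset.sum_congr rfl
      intro k hk
      have hgk : S15.Jg tat k = j := (Finset.mem_filter.1 hk).2
      unfold S15.uv S15.qv
      rw [hgk]
    rw [e1]
    have := le_abs_self (∑ k ∈ F, S15.uv tat k)
    linarith
  -- combine
  have hfgnn : 0 ≤ ∑ k ∈ F, lam * tat.P k j * |S15.mt tat k| * S15.De tat k := by
    apply Finset.sum_nonneg
    intro k _
    have := (S15.P_pos tat hm hlam0 hlam hp0 k j).le
    have := (S15.De_pos tat k).le
    positivity
  have hS2 : (∑ k ∈ F, lam * tat.P k j * |S15.mt tat k| * S15.De tat k)^2 ≤ ε^2 := by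
    have e1 : ∑ k ∈ F, Real.sqrt (lam * tat.P k j * S15.De tat k)
          * (Real.sqrt (lam * tat.P k j * S15.De tat k) * |S15.mt tat k|)
        = ∑ k ∈ F, lam * tat.P k j * |S15.mt tat k| * S15.De tat k :=
      Finset.sum_congr rfl (fun k _ => hfg k)
    rw [← e1]
    have hfsq' : 0 ≤ ∑ k ∈ F, (Real.sqrt (lam * tat.P k j * S15.De tat k))^2 :=
      Finset.sum_nonneg fun k _ => sq_nonneg _
    have h2 : (∑ k ∈ F, (Real.sqrt (lam * tat.P k j * S15.De tat k))^2)
          * (∑ k ∈ F, (Real.sqrt (lam * tat.P k j * S15.De tat k) * |S15.mt tat k|)^2)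
        ≤ (2 * lam * S15.Bp M lam p0) * ε' := by
      apply mul_le_mul hfsq hgsq
        (Finset.sum_nonneg fun k _ => sq_nonneg _) (by positivity)
    have h3 : (2 * lam * S15.Bp M lam p0) * ε' = ε^2 := by
      rw [hε'def]
      field_simp
    calc (∑ k ∈ F, Real.sqrt (lam * tat.P k j * S15.De tat k)
          * (Real.sqrt (lam * tat.P k j * S15.De tat k) * |S15.mt tat k|))^2
        ≤ _ := hCS
    _ ≤ (2 * lam * S15.Bp M lam p0) * ε' := h2
    _ = ε^2 := h3
  have hSle : ∑ k ∈ F, lam * tat.P k j * |S15.mt tat k| * S15.De tat k ≤ ε := by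
    nlinarith [hS2, hfgnn, hε]
  calc |tat.P κ₀ j - tat.P κ₁ j| = |tat.P κ₁ j - tat.P κ₀ j| := habs
  _ ≤ ∑ k ∈ Finset.Ico κ₀ κ₁, |tat.P (k+1) j - tat.P k j| := htele
  _ = ∑ k ∈ F, lam * tat.P k j * |S15.mt tat k| * S15.De tat k := hsum1
  _ ≤ ε := hSle
end
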